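/- arXiv:2211.11714 — 7 statements merged into one kernel-verified Lean document; each statement's English description precedes it below -/
import Mathlib

section
/- The graph D is 2-tough, where D is the graph with vertex set {a_{i,j} : 1 ≤ i ≤ 4, 1 ≤ j ≤ 39} and edge set consisting of: the four 39-cycles a_{i,1}a_{i,2}…a_{i,39}a_{i,1} for i ∈ {1,2,3,4}; the edges a_{i,j}a_{i+1,j} for all i ∈ {1,2,3} and j ∈ {1,…,39}; the edges a_{i,j}a_{i+1,j+1} for all i ∈ {1,2,3} and j ∈ {1,…,39}, indices of the second coordinate taken modulo 39 (so a_{i+1,40} := a_{i+1,1}); and the edges a_{4,1}a_{4,j} for all j ∈ {3,…,38}. -/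
open SimpleGraph

set_option maxRecDepth 10000

/-- The number of connected components of the graph obtained from `G` by deleting the
vertices of `S`. -/
noncomputable def delComponents {V : Type*} [Fintype V] (G : SimpleGraph V) (S : Finset V) : ℕ :=
  Nat.card ((G.induce ((↑S : Set V)ᶜ)).ConnectedComponent)

/-- A graph `G` is `t`-tough if `|S| ≥ t · c(G − S)` for every vertex subset `S` with
`c(G − S) ≥ 2`. -/
def IsTough {V : Type*} [Fintype V] (t : ℝ) (G : SimpleGraph V) : Prop :=
  ∀ S : Finset V, 2 ≤ delComponents G S → t * (delComponents G S : ℝ) ≤ (S.card : ℝ)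

/-- The generating relation for the graph `D`.  The vertex `a_{i,j}` (with `1 ≤ i ≤ 4` and
`1 ≤ j ≤ 39`, indices of the second coordinate modulo 39) is encoded as the pair
`(i - 1, j - 1) : Fin 4 × ZMod 39`.  The relation records:
the four 39-cycles `a_{i,1} a_{i,2} … a_{i,39} a_{i,1}`;
the edges `a_{i,j} a_{i+1,j}` for `i ∈ {1,2,3}`;
the edges `a_{i,j} a_{i+1,j+1}` for `i ∈ {1,2,3}` (second index modulo 39);
and the edges `a_{4,1} a_{4,j}` for `j ∈ {3,…,38}`. -/
def DRel (p q : Fin 4 × ZMod 39) : Prop :=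
  (p.1 = q.1 ∧ q.2 = p.2 + 1) ∨
  ((p.1 : ℕ) + 1 = (q.1 : ℕ) ∧ (q.2 = p.2 ∨ q.2 = p.2 + 1)) ∨
  (p.1 = 3 ∧ q.1 = 3 ∧ p.2 = 0 ∧ 2 ≤ q.2.val ∧ q.2.val ≤ 37)

/-- The graph `D`. -/
def graphD : SimpleGraph (Fin 4 × ZMod 39) := SimpleGraph.fromRel DRel

/-! ### Generic lemmas about components of induced subgraphs -/

section Generic
variable {W : Type*} [Fintype W] (G : SimpleGraph W)

lemma comps_le_card (U : Set W) :
    Nat.card (G.induce U).ConnectedComponent ≤ Nat.card U :=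
  Nat.card_le_card_of_surjective (G.induce U).connectedComponentMk (fun C => C.exists_rep)

lemma comps_split {U U1 U2 : Set W} (h : U1 ∪ U2 = U) :
    Nat.card (G.induce U).ConnectedComponent ≤
      Nat.card (G.induce U1).ConnectedComponent + Nat.card (G.induce U2).ConnectedComponent := by
  have h1 : U1 ⊆ U := h ▸ Set.subset_union_left
  have h2 : U2 ⊆ U := h ▸ Set.subset_union_right
  rw [← Nat.card_sum]
  apply Nat.card_le_card_of_surjective
    (Sum.elim (ConnectedComponent.map (G.induceHomOfLE h1).toHom)
      (ConnectedComponent.map (G.induceHomOfLE h2).toHom))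
  intro C
  obtain ⟨⟨v, hv⟩, rfl⟩ := C.exists_rep
  rcases (h ▸ hv : v ∈ U1 ∪ U2) with hv1 | hv2
  · exact ⟨Sum.inl ((G.induce U1).connectedComponentMk ⟨v, hv1⟩), rfl⟩
  · exact ⟨Sum.inr ((G.induce U2).connectedComponentMk ⟨v, hv2⟩), rfl⟩

lemma comps_cross {U U1 U2 : Set W} (h : U1 ∪ U2 = U)
    (hconn : Nat.card (G.induce U1).ConnectedComponent ≤ 1)
    {x y : W} (hx : x ∈ U1) (hy : y ∈ U2) (hxy : G.Adj x y) :
    Nat.card (G.induce U).ConnectedComponent ≤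
      Nat.card (G.induce U2).ConnectedComponent := by
  have h1 : U1 ⊆ U := h ▸ Set.subset_union_left
  have h2 : U2 ⊆ U := h ▸ Set.subset_union_right
  apply Nat.card_le_card_of_surjective (ConnectedComponent.map (G.induceHomOfLE h2).toHom)
  have hsub : Subsingleton (G.induce U1).ConnectedComponent :=
    Finite.card_le_one_iff_subsingleton.mp hconn
  intro C
  obtain ⟨⟨v, hv⟩, rfl⟩ := C.exists_rep
  rcases (h ▸ hv : v ∈ U1 ∪ U2) with hv1 | hv2
  · refine ⟨(G.induce U2).connectedComponentMk ⟨y, hy⟩, ?_⟩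
    have hreach1 : (G.induce U1).Reachable ⟨v, hv1⟩ ⟨x, hx⟩ :=
      (SimpleGraph.ConnectedComponent.eq).mp (Subsingleton.elim _ _)
    have hreachU : (G.induce U).Reachable ⟨v, h1 hv1⟩ ⟨x, h1 hx⟩ :=
      hreach1.map (G.induceHomOfLE h1).toHom
    have hadjU : (G.induce U).Adj ⟨x, h1 hx⟩ ⟨y, h2 hy⟩ := hxy
    exact ConnectedComponent.sound ((hreachU.trans hadjU.reachable).symm)
  · exact ⟨(G.induce U2).connectedComponentMk ⟨v, hv2⟩, rfl⟩

end Generic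

/-! ### Components of induced subgraphs of (squared) cycles -/

section Cycle
variable {W : Type*} [Fintype W] [DecidableEq W] (G : SimpleGraph W) {n : ℕ} [NeZero n]
  (φ : ZMod n → W) (S : Finset W)

private lemma hmem' {u : ZMod n} (hu : φ u ∉ S) : φ u ∈ Set.range φ \ ↑S := ⟨⟨u, rfl⟩, hu⟩

private def mkv (u : ZMod n) (hu : φ u ∉ S) :
    (G.induce (Set.range φ \ ↑S)).ConnectedComponent :=
  (G.induce (Set.range φ \ ↑S)).connectedComponentMk ⟨φ u, hmem' φ S hu⟩

private lemma mkv_congr {u u' : ZMod n} (h : u = u') (hu : φ u ∉ S) (hu' : φ u' ∉ S) :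
    mkv G φ S u hu = mkv G φ S u' hu' := by subst h; rfl

private lemma mkv_adj {u v : ZMod n} (hu : φ u ∉ S) (hv : φ v ∉ S)
    (h : G.Adj (φ u) (φ v)) : mkv G φ S u hu = mkv G φ S v hv := by
  exact ConnectedComponent.connectedComponentMk_eq_of_adj
    (show (G.induce (Set.range φ \ ↑S)).Adj ⟨φ u, hmem' φ S hu⟩ ⟨φ v, hmem' φ S hv⟩ from h)

lemma cycle2_bound (h1 : ∀ k, G.Adj (φ k) (φ (k+1))) (h2 : ∀ k, G.Adj (φ k) (φ (k+2)))
    (hc : 2 ≤ Nat.card (G.induce (Set.range φ \ ↑S)).ConnectedComponent) :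
    2 * Nat.card (G.induce (Set.range φ \ ↑S)).ConnectedComponent ≤
      (Finset.univ.filter (fun k => φ k ∈ S)).card := by
  classical
  have chase : ∀ (C : (G.induce (Set.range φ \ ↑S)).ConnectedComponent),
      (∀ u (hu : φ u ∉ S), mkv G φ S u hu = C → ¬(φ (u+1) ∈ S ∧ φ (u+2) ∈ S)) →
      ∀ m : ℕ, ∀ u v, v = u + (m : ZMod n) → ∀ (hu : φ u ∉ S) (hv : φ v ∉ S),
        mkv G φ S u hu = C → mkv G φ S v hv = C := by
    intro C hgood m
    induction m using Nat.strong_induction_on with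
    | _ m ih =>
      intro u v hvu hu hv hC
      match m, ih with
      | 0, _ =>
        have : v = u := by simpa using hvu
        exact (mkv_congr G φ S this hv hu).trans hC
      | (m+1), ih =>
        by_cases h1s : φ (u+1) ∈ S
        · have h2s : φ (u+2) ∉ S := fun h => hgood u hu hC ⟨h1s, h⟩
          match m, ih with
          | 0, _ =>
            have : v = u + 1 := by simpa using hvu
            exact absurd (this ▸ hv) (by simpa using h1s)
          | (m'+1), ih =>
            refine ih m' (by omega) (u+2) v ?_ h2s hv
              ((mkv_adj G φ S hu h2s (h2 u)).symm.trans hC)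
            rw [hvu]; push_cast; ring
        · refine ih m (by omega) (u+1) v ?_ h1s hv
            ((mkv_adj G φ S hu h1s (h1 u)).symm.trans hC)
          rw [hvu]; push_cast; ring
  have hex : ∀ C : (G.induce (Set.range φ \ ↑S)).ConnectedComponent,
      ∃ u, ∃ (hu : φ u ∉ S), mkv G φ S u hu = C ∧ φ (u+1) ∈ S ∧ φ (u+2) ∈ S := by
    intro C
    by_contra hno
    have hgood : ∀ u (hu : φ u ∉ S), mkv G φ S u hu = C → ¬(φ (u+1) ∈ S ∧ φ (u+2) ∈ S) :=
      fun u hu hC hb => hno ⟨u, hu, hC, hb.1, hb.2⟩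
    have : Nontrivial (G.induce (Set.range φ \ ↑S)).ConnectedComponent :=
      Finite.one_lt_card_iff_nontrivial.mp (by omega)
    obtain ⟨C', hC'⟩ := exists_ne C
    obtain ⟨⟨w0, hw0r, hw0s⟩, hrep0⟩ := C.exists_rep
    obtain ⟨u0, rfl⟩ := hw0r
    obtain ⟨⟨w1, hw1r, hw1s⟩, hrep1⟩ := C'.exists_rep
    obtain ⟨u1, rfl⟩ := hw1r
    have hmeq : u1 = u0 + (((u1 - u0).val : ℕ) : ZMod n) := by
      rw [ZMod.natCast_rightInverse (u1 - u0)]; ring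
    have := chase C hgood (u1 - u0).val u0 u1 hmeq hw0s hw1s hrep0
    exact hC' (hrep1 ▸ this)
  letI : Fintype (G.induce (Set.range φ \ ↑S)).ConnectedComponent := Fintype.ofFinite _
  choose g hg hgC hg1 hg2 using hex
  have ginj : Function.Injective g := by
    intro C C' h
    rw [← hgC C, ← hgC C']
    exact mkv_congr G φ S h _ _
  have hsub : (Finset.univ.image (fun C => g C + 1) ∪ Finset.univ.image (fun C => g C + 2))
      ⊆ Finset.univ.filter (fun k => φ k ∈ S) := by
    intro x hx
    simp only [Finset.mem_union, Finset.mem_image] at hx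
    rcases hx with ⟨C, _, rfl⟩ | ⟨C, _, rfl⟩
    · exact Finset.mem_filter.mpr ⟨Finset.mem_univ _, hg1 C⟩
    · exact Finset.mem_filter.mpr ⟨Finset.mem_univ _, hg2 C⟩
  have hdisj : Disjoint (Finset.univ.image (fun C => g C + 1))
      (Finset.univ.image (fun C => g C + 2)) := by
    rw [Finset.disjoint_left]
    rintro x hx1 hx2
    simp only [Finset.mem_image] at hx1 hx2
    obtain ⟨C, _, rfl⟩ := hx1
    obtain ⟨C', _, he⟩ := hx2
    have : g C = g C' + 1 := by linear_combination -he
    exact hg C (this ▸ hg1 C')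
  have hcard := Finset.card_le_card hsub
  rw [Finset.card_union_of_disjoint hdisj,
    Finset.card_image_of_injective _ (fun a b h => ginj (by simpa using h)),
    Finset.card_image_of_injective _ (fun a b h => ginj (by simpa using h)),
    Finset.card_univ] at hcard
  rw [Nat.card_eq_fintype_card]
  omega

lemma cycle1_bound (h1 : ∀ k, G.Adj (φ k) (φ (k+1))) :
    Nat.card (G.induce (Set.range φ \ ↑S)).ConnectedComponent ≤
      max 1 (Finset.univ.filter (fun k => φ k ∈ S)).card := by
  classical
  by_cases hT : ∀ k : ZMod n, φ k ∉ S
  · refine le_max_of_le_left ?_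
    rw [Finite.card_le_one_iff_subsingleton]
    constructor
    intro C C'
    obtain ⟨⟨w0, hw0r, hw0s⟩, hrep0⟩ := C.exists_rep
    obtain ⟨u0, rfl⟩ := hw0r
    obtain ⟨⟨w1, hw1r, hw1s⟩, hrep1⟩ := C'.exists_rep
    obtain ⟨u1, rfl⟩ := hw1r
    have St : ∀ m : ℕ, mkv G φ S (u0 + (m : ZMod n)) (hT _) = mkv G φ S u0 (hT _) := by
      intro m
      induction m with
      | zero => exact mkv_congr G φ S (by push_cast; ring) _ _
      | succ m ihm =>
        have h1' : G.Adj (φ (u0 + (m : ZMod n))) (φ (u0 + ((m+1 : ℕ) : ZMod n))) := by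
          rw [show ((m+1 : ℕ) : ZMod n) = (m : ZMod n) + 1 by push_cast; ring, ← add_assoc]
          exact h1 _
        exact ((mkv_adj G φ S (hT _) (hT _) h1').symm).trans ihm
    have hmeq : u0 + (((u1 - u0).val : ℕ) : ZMod n) = u1 := by
      rw [ZMod.natCast_rightInverse (u1 - u0)]; ring
    rw [← hrep0, ← hrep1]
    exact ((mkv_congr G φ S hmeq.symm hw1s (hT _)).trans (St (u1 - u0).val)).symm
  · push_neg at hT
    obtain ⟨k0, hk0⟩ := hT
    refine le_max_of_le_right ?_
    have hex : ∀ C : (G.induce (Set.range φ \ ↑S)).ConnectedComponent,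
        ∃ u, ∃ (hu : φ u ∉ S), mkv G φ S u hu = C ∧ φ (u+1) ∈ S := by
      intro C
      by_contra hno
      have hgood : ∀ u (hu : φ u ∉ S), mkv G φ S u hu = C → φ (u+1) ∉ S :=
        fun u hu hC hb => hno ⟨u, hu, hC, hb⟩
      obtain ⟨⟨w0, hw0r, hw0s⟩, hrep0⟩ := C.exists_rep
      obtain ⟨u0, rfl⟩ := hw0r
      have St : ∀ m : ℕ, ∃ (h : φ (u0 + (m : ZMod n)) ∉ S),
          mkv G φ S (u0 + (m : ZMod n)) h = C := by
        intro m
        induction m with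
        | zero =>
          refine ⟨by simpa using hw0s, ?_⟩
          exact (mkv_congr G φ S (by push_cast; ring) _ hw0s).trans hrep0
        | succ m ihm =>
          obtain ⟨hm, hmC⟩ := ihm
          have hs : φ (u0 + (m : ZMod n) + 1) ∉ S := hgood _ hm hmC
          refine ⟨by rw [show ((m+1 : ℕ) : ZMod n) = (m : ZMod n) + 1 by push_cast; ring,
            ← add_assoc]; exact hs, ?_⟩
          refine (mkv_congr G φ S (by push_cast; ring) _ hs).trans ?_
          exact ((mkv_adj G φ S hm hs (h1 _)).symm).trans hmC
      obtain ⟨hbad, _⟩ := St (k0 - u0).val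
      rw [show u0 + (((k0 - u0).val : ℕ) : ZMod n) = k0 by
        rw [ZMod.natCast_rightInverse (k0 - u0)]; ring] at hbad
      exact hbad hk0
    letI : Fintype (G.induce (Set.range φ \ ↑S)).ConnectedComponent := Fintype.ofFinite _
    choose g hg hgC hg1 using hex
    have ginj : Function.Injective (fun C => g C + 1) := by
      intro C C' h
      have : g C = g C' := by simpa using h
      rw [← hgC C, ← hgC C']
      exact mkv_congr G φ S this _ _
    have hsub : Finset.univ.image (fun C => g C + 1) ⊆
        Finset.univ.filter (fun k => φ k ∈ S) := by
      intro x hx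
      simp only [Finset.mem_image] at hx
      obtain ⟨C, _, rfl⟩ := hx
      exact Finset.mem_filter.mpr ⟨Finset.mem_univ _, hg1 C⟩
    have hcard := Finset.card_le_card hsub
    rw [Finset.card_image_of_injective _ ginj, Finset.card_univ] at hcard
    rw [Nat.card_eq_fintype_card]
    exact hcard

end Cycle

/-! ### Specific facts about `graphD`, proved by `decide` -/

instance : DecidableRel DRel := fun p q => by unfold DRel; exact inferInstance

instance : DecidableRel graphD.Adj := fun v w =>
  decidable_of_iff _ (SimpleGraph.fromRel_adj DRel v w).symm

private abbrev Vt := Fin 4 × ZMod 39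

private def phi1 (k : ZMod 78) : Vt := (if k.val % 2 = 0 then 1 else 0, (k.val / 2 : ℕ))
private def phi2 (k : ZMod 78) : Vt := (if k.val % 2 = 0 then 3 else 2, (k.val / 2 : ℕ))
private def psi0 (k : ZMod 39) : Vt := (0, k)
private def psi3 (k : ZMod 39) : Vt := (3, k)

private lemma phi1_adj1 : ∀ k, graphD.Adj (phi1 k) (phi1 (k+1)) := by decide
private lemma phi1_adj2 : ∀ k, graphD.Adj (phi1 k) (phi1 (k+2)) := by decide
private lemma phi1_range : ∀ v : Vt, (∃ k, phi1 k = v) ↔ v.1.val ≤ 1 := by decide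
private lemma phi2_adj1 : ∀ k, graphD.Adj (phi2 k) (phi2 (k+1)) := by decide
private lemma phi2_adj2 : ∀ k, graphD.Adj (phi2 k) (phi2 (k+2)) := by decide
private lemma phi2_range : ∀ v : Vt, (∃ k, phi2 k = v) ↔ 2 ≤ v.1.val := by decide
private lemma psi0_adj1 : ∀ k, graphD.Adj (psi0 k) (psi0 (k+1)) := by decide
private lemma psi0_range : ∀ v : Vt, (∃ k, psi0 k = v) ↔ v.1 = 0 := by decide
private lemma psi3_adj1 : ∀ k, graphD.Adj (psi3 k) (psi3 (k+1)) := by decide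
private lemma psi3_range : ∀ v : Vt, (∃ k, psi3 k = v) ↔ v.1 = 3 := by decide
private lemma adj12 : ∀ j : ZMod 39, graphD.Adj (1, j) (2, j) := by decide
private lemma rowcard : ∀ i : Fin 4, (Finset.univ.filter fun v : Vt => v.1 = i).card = 39 := by
  decide
private lemma hfin01 : ∀ i : Fin 4, (i.val ≤ 1 ↔ i = 0 ∨ i = 1) := by decide
private lemma hfin23 : ∀ i : Fin 4, (2 ≤ i.val ↔ i = 2 ∨ i = 3) := by decide
private lemma zmodcast_inj : ∀ i i' : Fin 4, ((i.val : ZMod 39) = (i'.val : ZMod 39)) → i = i' :=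
  by decide

private lemma row_partition (S : Finset Vt) (i : Fin 4) :
    (S.filter fun v => v.1 = i).card
      + (Finset.univ.filter fun v : Vt => v ∉ S ∧ v.1 = i).card = 39 := by
  classical
  have e1 : (Finset.univ.filter fun v : Vt => v.1 = i).filter (fun v => v ∈ S)
      = S.filter (fun v => v.1 = i) := by
    ext v; simp [and_comm]
  have e2 : (Finset.univ.filter fun v : Vt => v.1 = i).filter (fun v => v ∉ S)
      = Finset.univ.filter (fun v => v ∉ S ∧ v.1 = i) := by
    ext v; simp [and_comm]
  rw [← e1, ← e2, Finset.card_filter_add_card_filter_not, rowcard]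

/-- the number of survivors in row `i`, as a `Nat.card`. -/
private lemma natcard_row (S : Finset Vt) (i : Fin 4) :
    Nat.card ({v : Vt | v ∉ S ∧ v.1 = i}) =
      (Finset.univ.filter fun v : Vt => v ∉ S ∧ v.1 = i).card := by
  classical
  have : {v : Vt | v ∉ S ∧ v.1 = i}
      = ↑(Finset.univ.filter fun v : Vt => v ∉ S ∧ v.1 = i) := by
    ext v; simp
  rw [this, Nat.card_coe_set_eq, Set.ncard_coe_finset]

private lemma phi1_inj : Function.Injective phi1 := by decide
private lemma phi2_inj : Function.Injective phi2 := by decide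
private lemma psi0_inj : Function.Injective psi0 := by decide
private lemma psi3_inj : Function.Injective psi3 := by decide

/-- The graph `D` is 2-tough. -/
theorem graphD_isTough_two : IsTough 2 graphD := by
  classical
  intro S hS2
  suffices h : 2 * delComponents graphD S ≤ S.card by
    have h' : ((2 * delComponents graphD S : ℕ) : ℝ) ≤ ((S.card : ℕ) : ℝ) := Nat.cast_le.mpr h
    push_cast at h'
    linarith
  have hcdef : delComponents graphD S
      = Nat.card ((graphD.induce ((↑S : Set Vt)ᶜ)).ConnectedComponent) := rfl
  set U1 : Set Vt := Set.range phi1 \ ↑S with hU1def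
  set U2 : Set Vt := Set.range phi2 \ ↑S with hU2def
  have hU12 : U1 ∪ U2 = (↑S : Set Vt)ᶜ := by
    ext v
    simp only [hU1def, hU2def, Set.mem_union, Set.mem_diff, Set.mem_compl_iff,
      Finset.mem_coe, Set.mem_range]
    constructor
    · rintro (⟨_, h⟩ | ⟨_, h⟩) <;> exact h
    · intro h
      rcases le_or_gt v.1.val 1 with hv | hv
      · exact Or.inl ⟨(phi1_range v).mpr hv, h⟩
      · exact Or.inr ⟨(phi2_range v).mpr hv, h⟩
  set cA := Nat.card (graphD.induce U1).ConnectedComponent with hcAdef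
  set cB := Nat.card (graphD.induce U2).ConnectedComponent with hcBdef
  have hcsplit : delComponents graphD S ≤ cA + cB := by
    rw [hcdef]; exact comps_split graphD hU12
  set SA := S.filter (fun v => v.1.val ≤ 1) with hSAdef
  set SB := S.filter (fun v => ¬ v.1.val ≤ 1) with hSBdef
  have hSAB : SA.card + SB.card = S.card :=
    Finset.card_filter_add_card_filter_not (p := fun v : Vt => v.1.val ≤ 1)
  have hA2 : 2 ≤ cA → 2 * cA ≤ SA.card := by
    intro h
    refine le_trans (cycle2_bound graphD phi1 S phi1_adj1 phi1_adj2 h) ?_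
    refine Finset.card_le_card_of_injOn phi1 ?_ ?_
    · intro a ha
      simp only [Finset.mem_coe, Finset.mem_filter, Finset.mem_univ, true_and] at ha
      exact Finset.mem_filter.mpr ⟨ha, (phi1_range (phi1 a)).mp ⟨a, rfl⟩⟩
    · exact fun a _ b _ hab => phi1_inj hab
  have hB2 : 2 ≤ cB → 2 * cB ≤ SB.card := by
    intro h
    refine le_trans (cycle2_bound graphD phi2 S phi2_adj1 phi2_adj2 h) ?_
    refine Finset.card_le_card_of_injOn phi2 ?_ ?_
    · intro a ha
      simp only [Finset.mem_coe, Finset.mem_filter, Finset.mem_univ, true_and] at ha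
      have h2 : 2 ≤ (phi2 a).1.val := (phi2_range (phi2 a)).mp ⟨a, rfl⟩
      exact Finset.mem_filter.mpr ⟨ha, by omega⟩
    · exact fun a _ b _ hab => phi2_inj hab
  have hmemU1 : ∀ j : ZMod 39, ((1:Fin 4), j) ∉ S → ((1:Fin 4), j) ∈ U1 := by
    intro j hj
    exact ⟨Set.mem_range.mpr ((phi1_range _).mpr (show (1:Fin 4).val ≤ 1 by decide)), by simpa using hj⟩
  have hmemU2 : ∀ j : ZMod 39, ((2:Fin 4), j) ∉ S → ((2:Fin 4), j) ∈ U2 := by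
    intro j hj
    exact ⟨Set.mem_range.mpr ((phi2_range _).mpr (show 2 ≤ (2:Fin 4).val by decide)), by simpa using hj⟩
  rcases Nat.lt_or_ge cA 2 with hA | hA <;> rcases Nat.lt_or_ge cB 2 with hB | hB
  · -- cA ≤ 1, cB ≤ 1
    by_cases hcr : ∃ x ∈ U1, ∃ y ∈ U2, graphD.Adj x y
    · obtain ⟨x, hx, y, hy, hxy⟩ := hcr
      have : delComponents graphD S ≤ cB := by
        rw [hcdef]; exact comps_cross graphD hU12 (by omega) hx hy hxy
      omega
    · push_neg at hcr
      have hnc1 : ∀ j : ZMod 39, ((1:Fin 4), j) ∉ S → ((2:Fin 4), j) ∈ S := by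
        intro j h1
        by_contra h2
        exact hcr _ (hmemU1 j h1) _ (hmemU2 j h2) (adj12 j)
      have h4 : 4 ≤ S.card := by
        have hle : (Finset.univ : Finset (Fin 4)).card ≤ S.card := by
          refine Finset.card_le_card_of_injOn
            (fun i => if ((1:Fin 4), ((i.val : ℕ) : ZMod 39)) ∈ S
              then ((1:Fin 4), ((i.val : ℕ) : ZMod 39))
              else ((2:Fin 4), ((i.val : ℕ) : ZMod 39))) ?_ ?_
          · intro i _
            by_cases hi : ((1:Fin 4), ((i.val : ℕ) : ZMod 39)) ∈ S
            · simpa [hi]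
            · simp only [hi, if_false]
              exact hnc1 _ hi
          · intro a _ b _ hab
            have h2 : ((a.val : ℕ) : ZMod 39) = ((b.val : ℕ) : ZMod 39) := by
              have := congrArg Prod.snd hab
              simpa [apply_ite Prod.snd] using this
            exact zmodcast_inj a b h2
        simpa using hle
      omega
  · -- cA ≤ 1, cB ≥ 2
    by_cases hcr : ∃ x ∈ U1, ∃ y ∈ U2, graphD.Adj x y
    · obtain ⟨x, hx, y, hy, hxy⟩ := hcr
      have hle : delComponents graphD S ≤ cB := by
        rw [hcdef]; exact comps_cross graphD hU12 (by omega) hx hy hxy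
      have := hB2 hB
      have : SB.card ≤ S.card := by omega
      omega
    · push_neg at hcr
      rcases Nat.lt_or_ge SA.card 2 with hSA | hSA
      · -- heavy case: row 2 is almost entirely deleted
        have hnc1 : ∀ j : ZMod 39, ((1:Fin 4), j) ∉ S → ((2:Fin 4), j) ∈ S := by
          intro j h1
          by_contra h2
          exact hcr _ (hmemU1 j h1) _ (hmemU2 j h2) (adj12 j)
        have hK : (Finset.univ.filter fun j : ZMod 39 => ((1:Fin 4), j) ∈ S).card
            ≤ SA.card := by
          refine Finset.card_le_card_of_injOn (fun j => ((1:Fin 4), j)) ?_ ?_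
          · intro j hj
            simp only [Finset.mem_coe, Finset.mem_filter, Finset.mem_univ, true_and] at hj
            exact Finset.mem_filter.mpr ⟨hj, show (1:Fin 4).val ≤ 1 by decide⟩
          · exact fun a _ b _ h => (Prod.ext_iff.mp h).2
        have huc : (Finset.univ.filter fun j : ZMod 39 => ((1:Fin 4), j) ∈ S).card
            + (Finset.univ.filter fun j : ZMod 39 => ((1:Fin 4), j) ∉ S).card = 39 := by
          rw [Finset.card_filter_add_card_filter_not, Finset.card_univ, ZMod.card]
        have hr2 : 38 ≤ (S.filter fun v : Vt => v.1 = 2).card := by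
          have h38 : 38 ≤ (Finset.univ.filter fun j : ZMod 39 => ((1:Fin 4), j) ∉ S).card := by
            omega
          refine le_trans h38 (Finset.card_le_card_of_injOn (fun j => ((2:Fin 4), j)) ?_ ?_)
          · intro j hj
            simp only [Finset.mem_coe, Finset.mem_filter, Finset.mem_univ, true_and] at hj
            exact Finset.mem_filter.mpr ⟨hnc1 j hj, rfl⟩
          · exact fun a _ b _ h => (Prod.ext_iff.mp h).2
        have hp2 := row_partition S 2
        have hcW2 : Nat.card (graphD.induce
            {v : Vt | v ∉ S ∧ v.1 = 2}).ConnectedComponent ≤ 1 := by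
          refine le_trans (comps_le_card _ _) ?_
          rw [natcard_row]
          omega
        have hsplitB : (Set.range psi3 \ ↑S) ∪ {v : Vt | v ∉ S ∧ v.1 = 2} = U2 := by
          ext v
          simp only [Set.mem_union, Set.mem_diff, Set.mem_setOf_eq, hU2def,
            Finset.mem_coe, Set.mem_range]
          constructor
          · rintro (⟨⟨k, rfl⟩, h⟩ | ⟨h, h2⟩)
            · exact ⟨(phi2_range _).mpr (show 2 ≤ (3:Fin 4).val by decide), h⟩
            · exact ⟨(phi2_range _).mpr (by rw [h2]; decide), by simpa using h⟩
          · rintro ⟨hr, h⟩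
            have h23 := (hfin23 v.1).mp ((phi2_range v).mp hr)
            rcases h23 with h2 | h3
            · exact Or.inr ⟨by simpa using h, h2⟩
            · exact Or.inl ⟨(psi3_range v).mpr h3, h⟩
        have hcBsplit : cB ≤ Nat.card (graphD.induce
              (Set.range psi3 \ ↑S)).ConnectedComponent
            + Nat.card (graphD.induce {v : Vt | v ∉ S ∧ v.1 = 2}).ConnectedComponent :=
          comps_split graphD hsplitB
        have hc3max := cycle1_bound graphD psi3 S psi3_adj1
        have hT3 : (Finset.univ.filter fun k : ZMod 39 => psi3 k ∈ S).card
            ≤ (S.filter fun v : Vt => v.1 = 3).card := by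
          refine Finset.card_le_card_of_injOn psi3 ?_ ?_
          · intro k hk
            simp only [Finset.mem_coe, Finset.mem_filter, Finset.mem_univ, true_and] at hk
            exact Finset.mem_filter.mpr ⟨hk, rfl⟩
          · exact fun a _ b _ h => psi3_inj h
        have hc3card : Nat.card (graphD.induce
            (Set.range psi3 \ ↑S)).ConnectedComponent
            ≤ (Finset.univ.filter fun v : Vt => v ∉ S ∧ v.1 = 3).card := by
          refine le_trans (comps_le_card _ _) ?_
          have he : Set.range psi3 \ ↑S = {v : Vt | v ∉ S ∧ v.1 = 3} := by
            ext v
            simp only [Set.mem_diff, Set.mem_setOf_eq, Set.mem_range, Finset.mem_coe]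
            constructor
            · rintro ⟨⟨k, rfl⟩, h⟩; exact ⟨h, rfl⟩
            · rintro ⟨h, h3⟩; exact ⟨(psi3_range v).mpr h3, h⟩
          rw [he, natcard_row]
        have hp3 := row_partition S 3
        have hS23 : (S.filter fun v : Vt => v.1 = 2).card
            + (S.filter fun v : Vt => v.1 = 3).card ≤ S.card := by
          have hdj : Disjoint (S.filter fun v : Vt => v.1 = 2)
              (S.filter fun v : Vt => v.1 = 3) := by
            rw [Finset.disjoint_left]
            intro a h2 h3
            simp only [Finset.mem_filter] at h2 h3
            exact absurd (h2.2.symm.trans h3.2) (by decide)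
          calc (S.filter fun v : Vt => v.1 = 2).card
                + (S.filter fun v : Vt => v.1 = 3).card
              = ((S.filter fun v : Vt => v.1 = 2) ∪ (S.filter fun v : Vt => v.1 = 3)).card :=
                (Finset.card_union_of_disjoint hdj).symm
            _ ≤ S.card := Finset.card_le_card
                (Finset.union_subset (Finset.filter_subset _ _) (Finset.filter_subset _ _))
        rcases le_max_iff.mp hc3max with h1c | h1c <;> omega
      · -- SA.card ≥ 2
        have := hB2 hB
        omega
  · -- cA ≥ 2, cB ≤ 1
    by_cases hcr : ∃ x ∈ U1, ∃ y ∈ U2, graphD.Adj x y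
    · obtain ⟨x, hx, y, hy, hxy⟩ := hcr
      have hle : delComponents graphD S ≤ cA := by
        rw [hcdef]
        exact comps_cross graphD (by rw [Set.union_comm] at hU12; exact hU12)
          (by omega) hy hx hxy.symm
      have := hA2 hA
      have : SA.card ≤ S.card := by omega
      omega
    · push_neg at hcr
      rcases Nat.lt_or_ge SB.card 2 with hSB | hSB
      · -- heavy case: row 1 is almost entirely deleted
        have hnc2 : ∀ j : ZMod 39, ((2:Fin 4), j) ∉ S → ((1:Fin 4), j) ∈ S := by
          intro j h2
          by_contra h1
          exact hcr _ (hmemU1 j h1) _ (hmemU2 j h2) (adj12 j)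
        have hK : (Finset.univ.filter fun j : ZMod 39 => ((2:Fin 4), j) ∈ S).card
            ≤ SB.card := by
          refine Finset.card_le_card_of_injOn (fun j => ((2:Fin 4), j)) ?_ ?_
          · intro j hj
            simp only [Finset.mem_coe, Finset.mem_filter, Finset.mem_univ, true_and] at hj
            exact Finset.mem_filter.mpr ⟨hj, show ¬ (2:Fin 4).val ≤ 1 by decide⟩
          · exact fun a _ b _ h => (Prod.ext_iff.mp h).2
        have huc : (Finset.univ.filter fun j : ZMod 39 => ((2:Fin 4), j) ∈ S).card
            + (Finset.univ.filter fun j : ZMod 39 => ((2:Fin 4), j) ∉ S).card = 39 := by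
          rw [Finset.card_filter_add_card_filter_not, Finset.card_univ, ZMod.card]
        have hr1 : 38 ≤ (S.filter fun v : Vt => v.1 = 1).card := by
          have h38 : 38 ≤ (Finset.univ.filter fun j : ZMod 39 => ((2:Fin 4), j) ∉ S).card := by
            omega
          refine le_trans h38 (Finset.card_le_card_of_injOn (fun j => ((1:Fin 4), j)) ?_ ?_)
          · intro j hj
            simp only [Finset.mem_coe, Finset.mem_filter, Finset.mem_univ, true_and] at hj
            exact Finset.mem_filter.mpr ⟨hnc2 j hj, rfl⟩
          · exact fun a _ b _ h => (Prod.ext_iff.mp h).2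
        have hp1 := row_partition S 1
        have hcW1 : Nat.card (graphD.induce
            {v : Vt | v ∉ S ∧ v.1 = 1}).ConnectedComponent ≤ 1 := by
          refine le_trans (comps_le_card _ _) ?_
          rw [natcard_row]
          omega
        have hsplitA : (Set.range psi0 \ ↑S) ∪ {v : Vt | v ∉ S ∧ v.1 = 1} = U1 := by
          ext v
          simp only [Set.mem_union, Set.mem_diff, Set.mem_setOf_eq, hU1def,
            Finset.mem_coe, Set.mem_range]
          constructor
          · rintro (⟨⟨k, rfl⟩, h⟩ | ⟨h, h1⟩)
            · exact ⟨(phi1_range _).mpr (show (0:Fin 4).val ≤ 1 by decide), h⟩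
            · exact ⟨(phi1_range _).mpr (by rw [h1]; decide), by simpa using h⟩
          · rintro ⟨hr, h⟩
            have h01 := (hfin01 v.1).mp ((phi1_range v).mp hr)
            rcases h01 with h0 | h1
            · exact Or.inl ⟨(psi0_range v).mpr h0, h⟩
            · exact Or.inr ⟨by simpa using h, h1⟩
        have hcAsplit : cA ≤ Nat.card (graphD.induce
              (Set.range psi0 \ ↑S)).ConnectedComponent
            + Nat.card (graphD.induce {v : Vt | v ∉ S ∧ v.1 = 1}).ConnectedComponent :=
          comps_split graphD hsplitA
        have hc0max := cycle1_bound graphD psi0 S psi0_adj1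
        have hT0 : (Finset.univ.filter fun k : ZMod 39 => psi0 k ∈ S).card
            ≤ (S.filter fun v : Vt => v.1 = 0).card := by
          refine Finset.card_le_card_of_injOn psi0 ?_ ?_
          · intro k hk
            simp only [Finset.mem_coe, Finset.mem_filter, Finset.mem_univ, true_and] at hk
            exact Finset.mem_filter.mpr ⟨hk, rfl⟩
          · exact fun a _ b _ h => psi0_inj h
        have hc0card : Nat.card (graphD.induce
            (Set.range psi0 \ ↑S)).ConnectedComponent
            ≤ (Finset.univ.filter fun v : Vt => v ∉ S ∧ v.1 = 0).card := by
          refine le_trans (comps_le_card _ _) ?_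
          have he : Set.range psi0 \ ↑S = {v : Vt | v ∉ S ∧ v.1 = 0} := by
            ext v
            simp only [Set.mem_diff, Set.mem_setOf_eq, Set.mem_range, Finset.mem_coe]
            constructor
            · rintro ⟨⟨k, rfl⟩, h⟩; exact ⟨h, rfl⟩
            · rintro ⟨h, h0⟩; exact ⟨(psi0_range v).mpr h0, h⟩
          rw [he, natcard_row]
        have hp0 := row_partition S 0
        have hS01 : (S.filter fun v : Vt => v.1 = 0).card
            + (S.filter fun v : Vt => v.1 = 1).card ≤ S.card := by
          have hdj : Disjoint (S.filter fun v : Vt => v.1 = 0)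
              (S.filter fun v : Vt => v.1 = 1) := by
            rw [Finset.disjoint_left]
            intro a h0 h1
            simp only [Finset.mem_filter] at h0 h1
            exact absurd (h0.2.symm.trans h1.2) (by decide)
          calc (S.filter fun v : Vt => v.1 = 0).card
                + (S.filter fun v : Vt => v.1 = 1).card
              = ((S.filter fun v : Vt => v.1 = 0) ∪ (S.filter fun v : Vt => v.1 = 1)).card :=
                (Finset.card_union_of_disjoint hdj).symm
            _ ≤ S.card := Finset.card_le_card
                (Finset.union_subset (Finset.filter_subset _ _) (Finset.filter_subset _ _))
        rcases le_max_iff.mp hc0max with h1c | h1c <;> omega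
      · -- SB.card ≥ 2
        have := hA2 hA
        omega
  · -- cA ≥ 2, cB ≥ 2
    have := hA2 hA
    have := hB2 hB
    omega
end

section
/- The graph D₁ is equal to the square Q² of the 78-cycle Q = a_{1,1} a_{2,2} a_{1,2} a_{2,3} a_{1,3} … a_{1,i} a_{2,i+1} a_{1,i+1} … a_{1,38} a_{2,39} a_{1,39} a_{2,1} a_{1,1}, where D₁ is the graph with vertex set {a_{i,j} : 1 ≤ i ≤ 2, 1 ≤ j ≤ 39} and edge set consisting of: the two 39-cycles a_{i,1}a_{i,2}…a_{i,39}a_{i,1} for i ∈ {1,2}; the edges a_{1,j}a_{2,j} for all j ∈ {1,…,39}; and the edges a_{1,j}a_{2,j+1} for all j ∈ {1,…,39}, second indices taken modulo 39 (so a_{2,40} := a_{2,1}). -/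
open SimpleGraph

/-- The square of a graph `G`: two distinct vertices are adjacent iff their distance in `G`
is at most 2, i.e. they are adjacent in `G` or have a common neighbor. -/
def square {V : Type*} (G : SimpleGraph V) : SimpleGraph V :=
  SimpleGraph.fromRel (fun v w => G.Adj v w ∨ ∃ u, G.Adj v u ∧ G.Adj u w)

/-- The graph `D₁`.  The vertex `a_{i,j}` (with `1 ≤ i ≤ 2` and `1 ≤ j ≤ 39`, second
indices modulo 39) is encoded as the pair `(i - 1, j - 1) : Fin 2 × ZMod 39`.  Its edges are:
the two 39-cycles `a_{i,1} a_{i,2} … a_{i,39} a_{i,1}` for `i ∈ {1,2}`;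
the edges `a_{1,j} a_{2,j}` for all `j`; and the edges `a_{1,j} a_{2,j+1}` for all `j`
(second indices modulo 39). -/
def graphD₁ : SimpleGraph (Fin 2 × ZMod 39) :=
  SimpleGraph.fromRel (fun p q =>
    (p.1 = q.1 ∧ q.2 = p.2 + 1) ∨
    ((p.1 : ℕ) = 0 ∧ (q.1 : ℕ) = 1 ∧ (q.2 = p.2 ∨ q.2 = p.2 + 1)))

/-- The 78-cycle `Q = a_{1,1} a_{2,2} a_{1,2} a_{2,3} a_{1,3} … a_{1,38} a_{2,39} a_{1,39}
a_{2,1} a_{1,1}`: its edges are exactly `a_{1,j} a_{2,j}` and `a_{1,j} a_{2,j+1}` for all `j`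
(second indices modulo 39). -/
def cycleQ : SimpleGraph (Fin 2 × ZMod 39) :=
  SimpleGraph.fromRel (fun p q =>
    (p.1 : ℕ) = 0 ∧ (q.1 : ℕ) = 1 ∧ (q.2 = p.2 ∨ q.2 = p.2 + 1))

lemma cycleQ_adj (v w : Fin 2 × ZMod 39) :
    cycleQ.Adj v w ↔
      ((v.1 : ℕ) = 0 ∧ (w.1 : ℕ) = 1 ∧ (w.2 = v.2 ∨ w.2 = v.2 + 1)) ∨
      ((w.1 : ℕ) = 0 ∧ (v.1 : ℕ) = 1 ∧ (v.2 = w.2 ∨ v.2 = w.2 + 1)) := by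
  rw [cycleQ, SimpleGraph.fromRel_adj]
  constructor
  · rintro ⟨-, h⟩; exact h
  · intro h
    refine ⟨?_, h⟩
    rintro rfl
    rcases h with ⟨h0, h1, -⟩ | ⟨h0, h1, -⟩ <;> omega

lemma exists_common (a : Fin 2) (x : ZMod 39) :
    ∃ u : Fin 2 × ZMod 39, cycleQ.Adj (a, x) u ∧ cycleQ.Adj u (a, x + 1) := by
  fin_cases a
  · exact ⟨(1, x + 1), by rw [cycleQ_adj]; simp, by rw [cycleQ_adj]; simp⟩
  · exact ⟨(0, x), by rw [cycleQ_adj]; simp, by rw [cycleQ_adj]; simp⟩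

lemma common_imp {a b : Fin 2} {x y : ZMod 39} {u : Fin 2 × ZMod 39}
    (h1 : cycleQ.Adj (a, x) u) (h2 : cycleQ.Adj u (b, y))
    (hne : (a, x) ≠ (b, y)) :
    a = b ∧ (y = x + 1 ∨ x = y + 1) := by
  obtain ⟨c, z⟩ := u
  rw [cycleQ_adj] at h1 h2
  have hxy : a = b → x ≠ y := by
    rintro rfl rfl; exact hne rfl
  rcases h1 with ⟨ha, hc, hz1⟩ | ⟨hc, ha, hz1⟩ <;>
    rcases h2 with ⟨hc', hb, hz2⟩ | ⟨hb, hc', hz2⟩ <;>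
    simp only at ha hb hc hc' hz1 hz2
  · omega
  · have hab : a = b := Fin.ext (by omega)
    refine ⟨hab, ?_⟩
    have hx : x ≠ y := hxy hab
    rcases hz1 with h1' | h1' <;> rcases hz2 with h2' | h2'
    · exact absurd (h1'.symm.trans h2') hx
    · exact Or.inr (h1'.symm.trans h2')
    · exact Or.inl (h2'.symm.trans h1')
    · exact absurd (add_right_cancel (h1'.symm.trans h2')) hx
  · have hab : a = b := Fin.ext (by omega)
    refine ⟨hab, ?_⟩
    have hx : x ≠ y := hxy hab
    rcases hz1 with h1' | h1' <;> rcases hz2 with h2' | h2'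
    · exact absurd (h1'.trans h2'.symm) hx
    · exact Or.inl (h2'.trans (by rw [h1']))
    · exact Or.inr (h1'.trans (by rw [h2']))
    · exact absurd (h1'.trans h2'.symm) hx
  · omega

/-- The graph `D₁` is equal to the square of the 78-cycle `Q`. -/
theorem graphD₁_eq_square_cycleQ : graphD₁ = square cycleQ := by
  ext v w
  rw [graphD₁, SimpleGraph.fromRel_adj, square, SimpleGraph.fromRel_adj]
  obtain ⟨a, x⟩ := v
  obtain ⟨b, y⟩ := w
  constructor
  · rintro ⟨hne, h⟩
    refine ⟨hne, ?_⟩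
    rcases h with (⟨hab, hy⟩ | hC) | (⟨hba, hx⟩ | hC')
    · simp only at hab hy
      subst hab; subst hy
      exact Or.inl (Or.inr (exists_common a x))
    · exact Or.inl (Or.inl ((cycleQ_adj _ _).2 (Or.inl hC)))
    · simp only at hba hx
      subst hba; subst hx
      exact Or.inr (Or.inr (exists_common b y))
    · exact Or.inl (Or.inl ((cycleQ_adj _ _).2 (Or.inr hC')))
  · rintro ⟨hne, h⟩
    refine ⟨hne, ?_⟩
    rcases h with (hQ | ⟨u, h1, h2⟩) | (hQ | ⟨u, h1, h2⟩)
    · rcases (cycleQ_adj _ _).1 hQ with hC | hC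
      · exact Or.inl (Or.inr hC)
      · exact Or.inr (Or.inr hC)
    · obtain ⟨hab, h⟩ := common_imp h1 h2 hne
      rcases h with hy | hx
      · exact Or.inl (Or.inl ⟨hab, hy⟩)
      · exact Or.inr (Or.inl ⟨hab.symm, hx⟩)
    · rcases (cycleQ_adj _ _).1 hQ with hC | hC
      · exact Or.inr (Or.inr hC)
      · exact Or.inl (Or.inr hC)
    · obtain ⟨hba, h⟩ := common_imp h1 h2 (Ne.symm hne)
      rcases h with hx | hy
      · exact Or.inr (Or.inl ⟨hba, hx⟩)
      · exact Or.inl (Or.inl ⟨hba.symm, hy⟩)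
end

section
/- For every integer n ≥ 3, the square of the cycle on n vertices is 2-tough. -/
open SimpleGraph

open Fin.NatCast Fin.CommRing

private lemma cyc_adj_succ {m : ℕ} (v : Fin (m+3)) : (cycleGraph (m+3)).Adj v (v+1) := by
  rw [cycleGraph_adj]
  right
  ring

private lemma sq_adj_succ {m : ℕ} (v : Fin (m+3)) :
    (square (cycleGraph (m+3))).Adj v (v+1) := by
  rw [square, fromRel_adj]
  refine ⟨?_, Or.inl (Or.inl (cyc_adj_succ v))⟩
  intro h
  have h1 : (1 : Fin (m+3)) = 0 := (left_eq_add.mp h).symm ▸ rfl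
  have := congrArg Fin.val (left_eq_add.mp h)
  simp [Fin.val_one] at this

private lemma sq_adj_two {m : ℕ} (v : Fin (m+3)) :
    (square (cycleGraph (m+3))).Adj v (v+1+1) := by
  rw [square, fromRel_adj]
  refine ⟨?_, Or.inl (Or.inr ⟨v+1, cyc_adj_succ v, cyc_adj_succ (v+1)⟩)⟩
  intro h
  rw [add_assoc] at h
  have h0 : (1 + 1 : Fin (m+3)) = 0 := left_eq_add.mp h
  have h2 := congrArg Fin.val h0
  rw [Fin.add_def] at h2
  simp [Nat.mod_eq_of_lt (show 1+1 < m+3 by omega)] at h2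

/-- For every integer `n ≥ 3`, the square of the cycle on `n` vertices is 2-tough. -/
theorem isTough_two_square_cycleGraph (n : ℕ) (hn : 3 ≤ n) :
    IsTough 2 (square (cycleGraph n)) := by
  obtain ⟨m, rfl⟩ : ∃ m, n = m + 3 := ⟨n - 3, by omega⟩
  intro S hS
  set G := square (cycleGraph (m+3)) with hG
  set H := G.induce ((↑S : Set (Fin (m+3)))ᶜ) with hH
  have hdel : delComponents G S = Nat.card H.ConnectedComponent := rfl
  have memc : ∀ a : Fin (m+3), a ∈ ((↑S : Set (Fin (m+3)))ᶜ) ↔ a ∉ S := fun a => by simp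
  have step : ∀ (a b : Fin (m+3)) (ha : a ∈ ((↑S : Set (Fin (m+3)))ᶜ))
      (hb : b ∈ ((↑S : Set (Fin (m+3)))ᶜ)), G.Adj a b →
      H.connectedComponentMk ⟨a, ha⟩ = H.connectedComponentMk ⟨b, hb⟩ := by
    intro a b ha hb hab
    exact ConnectedComponent.sound (Adj.reachable (by simpa [hH] using hab))
  have exists_cut : ∀ C : H.ConnectedComponent,
      ∃ (v : Fin (m+3)) (hv : v ∈ ((↑S : Set (Fin (m+3)))ᶜ)),
        H.connectedComponentMk ⟨v, hv⟩ = C ∧ v + 1 ∈ S ∧ v + 1 + 1 ∈ S := by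
    intro C
    by_contra hcon
    push_neg at hcon
    obtain ⟨⟨v0, hv0⟩, hx0⟩ := C.exists_rep
    have key : ∀ k : ℕ,
        (∃ hv : (v0 + (k : Fin (m+3))) ∈ ((↑S : Set (Fin (m+3)))ᶜ),
          H.connectedComponentMk ⟨v0 + (k : Fin (m+3)), hv⟩ = C) ∨
        ((v0 + (k : Fin (m+3))) ∈ S ∧
          ∃ hv : (v0 + (k : Fin (m+3)) + 1) ∈ ((↑S : Set (Fin (m+3)))ᶜ),
            H.connectedComponentMk ⟨v0 + (k : Fin (m+3)) + 1, hv⟩ = C) := by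
      intro k
      induction k with
      | zero =>
        left
        refine ⟨by simpa using hv0, ?_⟩
        convert hx0 using 2
        simp
        exact Iff.rfl
      | succ k ih =>
        have hcast : (((k+1 : ℕ)) : Fin (m+3)) = (k : Fin (m+3)) + 1 := by push_cast; ring
        rw [hcast, ← add_assoc]
        rcases ih with ⟨hv, hc⟩ | ⟨hmem, hv, hc⟩
        · set w := v0 + (k : Fin (m+3)) with hw
          by_cases h1 : w + 1 ∈ S
          · have h2 : w + 1 + 1 ∉ S := hcon w hv hc h1
            right
            refine ⟨h1, (memc _).mpr h2, ?_⟩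
            rw [← hc]
            exact (step w (w+1+1) hv ((memc _).mpr h2) (sq_adj_two w)).symm
          · left
            refine ⟨(memc _).mpr h1, ?_⟩
            rw [← hc]
            exact (step w (w+1) hv ((memc _).mpr h1) (sq_adj_succ w)).symm
        · left
          exact ⟨hv, hc⟩
    have all_eq : ∀ x : ((↑S : Set (Fin (m+3)))ᶜ : Set (Fin (m+3))),
        H.connectedComponentMk x = C := by
      rintro ⟨u, hu⟩
      have huv : v0 + (((u - v0).val : ℕ) : Fin (m+3)) = u := by
        rw [Fin.cast_val_eq_self]; ring
      obtain ⟨hv, hc⟩ | ⟨hmem, _⟩ := key (u - v0).val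
      · have he : (⟨v0 + (((u - v0).val : ℕ) : Fin (m+3)), hv⟩ :
            ((↑S : Set (Fin (m+3)))ᶜ : Set (Fin (m+3)))) = ⟨u, hu⟩ := Subtype.ext huv
        rwa [he] at hc
      · rw [huv] at hmem
        exact absurd hmem ((memc u).mp hu)
    have hsub : Subsingleton H.ConnectedComponent := by
      constructor
      intro a b
      obtain ⟨x, rfl⟩ := a.exists_rep
      obtain ⟨y, rfl⟩ := b.exists_rep
      rw [show Quot.mk _ x = H.connectedComponentMk x from rfl,
        show Quot.mk _ y = H.connectedComponentMk y from rfl, all_eq x, all_eq y]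
    rw [hdel] at hS
    have := Finite.card_le_one_iff_subsingleton.mpr hsub
    omega
  choose g hgmem hgc hg1 hg2 using exists_cut
  have hginj : ∀ C C' : H.ConnectedComponent, g C = g C' → C = C' := by
    intro C C' h
    rw [← hgc C, ← hgc C']
    congr 1
    exact Subtype.ext h
  set F : H.ConnectedComponent × Bool → ((↑S : Set (Fin (m+3))) : Set (Fin (m+3))) :=
    fun p => if p.2 then ⟨g p.1 + 1, by simpa using hg1 p.1⟩
      else ⟨g p.1 + 1 + 1, by simpa using hg2 p.1⟩ with hF
  have hFinj : Function.Injective F := by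
    rintro ⟨C, b⟩ ⟨C', b'⟩ h
    have hval := congrArg Subtype.val h
    cases b <;> cases b' <;> simp only [hF, Bool.false_eq_true, if_true, if_false,
      ite_true, ite_false] at hval
    · have := hginj C C' (add_right_cancel (add_right_cancel hval))
      rw [this]
    · exfalso
      have e : g C + 1 = g C' := add_right_cancel hval
      have : g C' ∈ S := by rw [← e]; exact hg1 C
      exact ((memc _).mp (hgmem C')) this
    · exfalso
      have e : g C = g C' + 1 := add_right_cancel hval
      have : g C ∈ S := by rw [e]; exact hg1 C'
      exact ((memc _).mp (hgmem C)) this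
    · have := hginj C C' (add_right_cancel hval)
      rw [this]
  have hcard : Nat.card (H.ConnectedComponent × Bool) ≤
      Nat.card ((↑S : Set (Fin (m+3))) : Set (Fin (m+3))) :=
    Nat.card_le_card_of_injective F hFinj
  rw [Nat.card_prod, Nat.card_coe_set_eq, Set.ncard_coe_finset] at hcard
  have hbool : Nat.card Bool = 2 := by simp [Nat.card_eq_fintype_card]
  rw [hbool] at hcard
  rw [hdel]
  have : (2 : ℝ) * (Nat.card H.ConnectedComponent : ℝ) ≤ (S.card : ℝ) := by
    exact_mod_cast by omega
  exact this
end

section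
/- For any graph G, the square G² of G is κ(G)-tough, where κ(G) is the vertex connectivity of G. -/
open SimpleGraph

/-- The vertex connectivity `κ(G)`: the minimum number of vertices whose deletion
disconnects `G` or reduces it to a single vertex. -/
noncomputable def vertexConnectivity {V : Type*} [Fintype V] (G : SimpleGraph V) : ℕ :=
  sInf {k : ℕ | ∃ S : Finset V, S.card = k ∧
    (¬ (G.induce ((↑S : Set V)ᶜ)).Connected ∨ ((↑S : Set V)ᶜ).ncard = 1)}

/-AUX-/
theorem key {V : Type*} [Fintype V] (G : SimpleGraph V) (S : Finset V)
    (hS : 2 ≤ delComponents (square G) S) :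
    vertexConnectivity G * delComponents (square G) S ≤ S.card := by
  classical
  set H := (square G).induce ((↑S : Set V)ᶜ) with hHdef
  haveI : Fintype H.ConnectedComponent := Fintype.ofFinite _
  let Cset : H.ConnectedComponent → Set V :=
    fun c => {x | ∃ h : x ∈ ((↑S : Set V)ᶜ), H.connectedComponentMk ⟨x, h⟩ = c}
  let N : H.ConnectedComponent → Finset V :=
    fun c => S.filter (fun u => ∃ v ∈ Cset c, G.Adj u v)
  -- absorption
  have habs : ∀ (c : H.ConnectedComponent) (x y : V), x ∈ Cset c → G.Adj x y →
      y ∉ (N c : Finset V) → y ∈ Cset c := by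
    intro c x y hx hxy hyN
    obtain ⟨hxS, hxc⟩ := hx
    have hyS : y ∉ S := by
      intro hyS
      exact hyN (Finset.mem_filter.2 ⟨hyS, ⟨x, ⟨hxS, hxc⟩, hxy.symm⟩⟩)
    have hyS' : y ∈ ((↑S : Set V)ᶜ) := hyS
    have hadj : H.Adj ⟨x, hxS⟩ ⟨y, hyS'⟩ := by
      simp only [hHdef, comap_adj, Function.Embedding.coe_subtype]
      exact ⟨hxy.ne, Or.inl (Or.inl hxy)⟩
    exact ⟨hyS', by rw [← hxc]; exact (ConnectedComponent.sound hadj.reachable.symm)⟩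
  -- disjointness
  have hNdisj : ∀ c c' : H.ConnectedComponent, c ≠ c' → Disjoint (N c) (N c') := by
    intro c c' hne
    rw [Finset.disjoint_left]
    intro u hu hu'
    obtain ⟨huS, v, ⟨hvS, hvc⟩, huv⟩ := Finset.mem_filter.1 hu
    obtain ⟨_, w, ⟨hwS, hwc⟩, huw⟩ := Finset.mem_filter.1 hu'
    have hvw : v ≠ w := by
      rintro rfl
      exact hne (hvc ▸ hwc ▸ rfl)
    have hadj : H.Adj ⟨v, hvS⟩ ⟨w, hwS⟩ := by
      simp only [hHdef, comap_adj, Function.Embedding.coe_subtype]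
      exact ⟨hvw, Or.inl (Or.inr ⟨u, huv.symm, huw⟩)⟩
    exact hne (by rw [← hvc, ← hwc]; exact ConnectedComponent.sound hadj.reachable)
  -- each N c is a cut
  have hcut : ∀ c : H.ConnectedComponent, ¬ (G.induce ((↑(N c) : Set V)ᶜ)).Connected := by
    intro c hcon
    have hcard : 1 < Fintype.card H.ConnectedComponent := by
      have := hS; rwa [delComponents, Nat.card_eq_fintype_card] at this
    obtain ⟨c', hc'⟩ := Fintype.exists_ne_of_one_lt_card hcard c
    obtain ⟨v, hv⟩ := c.exists_rep
    obtain ⟨w, hw⟩ := c'.exists_rep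
    have hNsub : ∀ x : V, x ∉ S → x ∈ ((↑(N c) : Set V)ᶜ) := by
      intro x hx hxN
      exact hx (Finset.mem_filter.1 hxN).1
    have hvS : (v : V) ∉ S := v.2
    have hwS : (w : V) ∉ S := w.2
    obtain ⟨p⟩ : (G.induce ((↑(N c) : Set V)ᶜ)).Reachable ⟨v, hNsub _ hvS⟩ ⟨w, hNsub _ hwS⟩ :=
      hcon.preconnected _ _
    have hstep : ∀ a b : ((↑(N c) : Set V)ᶜ : Set V),
        ∀ _p : (G.induce ((↑(N c) : Set V)ᶜ)).Walk a b, (a : V) ∈ Cset c → (b : V) ∈ Cset c := by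
      intro a b p
      induction p with
      | nil => exact id
      | @cons x y z h q ih =>
        intro ha
        have hadj : G.Adj (x : V) (y : V) := h
        exact ih (habs c _ _ ha hadj y.2)
    have hvC : (v : V) ∈ Cset c := ⟨v.2, by rw [Subtype.coe_eta]; exact hv⟩
    have hwC : (w : V) ∈ Cset c := hstep _ _ p hvC
    obtain ⟨h1, h2⟩ := hwC
    apply hc'
    rw [← hw, ← h2, Subtype.coe_eta]
    rfl
  have hk : ∀ c : H.ConnectedComponent, vertexConnectivity G ≤ (N c).card := by
    intro c
    exact Nat.sInf_le ⟨N c, rfl, Or.inl (hcut c)⟩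
  -- sum up
  have hsum : (Finset.univ.biUnion N).card = ∑ c, (N c).card :=
    Finset.card_biUnion (fun c _ c' _ h => hNdisj c c' h)
  have hsub : Finset.univ.biUnion N ⊆ S := by
    intro u hu
    obtain ⟨c, _, hc⟩ := Finset.mem_biUnion.1 hu
    exact (Finset.mem_filter.1 hc).1
  calc vertexConnectivity G * delComponents (square G) S
      = ∑ _c : H.ConnectedComponent, vertexConnectivity G := by
        rw [Finset.sum_const, Finset.card_univ, delComponents, Nat.card_eq_fintype_card,
          mul_comm, smul_eq_mul]
    _ ≤ ∑ c, (N c).card := Finset.sum_le_sum (fun c _ => hk c)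
    _ = (Finset.univ.biUnion N).card := hsum.symm
    _ ≤ S.card := Finset.card_le_card hsub

/-- For any graph `G`, the square `G²` of `G` is `κ(G)`-tough. -/
theorem isTough_vertexConnectivity_square {V : Type*} [Fintype V] (G : SimpleGraph V) :
    IsTough (vertexConnectivity G : ℝ) (square G) := by
  intro S hS
  have h := key G S hS
  calc (vertexConnectivity G : ℝ) * (delComponents (square G) S : ℝ)
      = ((vertexConnectivity G * delComponents (square G) S : ℕ) : ℝ) := by push_cast; ring
    _ ≤ (S.card : ℝ) := by exact_mod_cast h
end

section
/- For every graph G and every pair of disjoint vertex subsets S, T of G, the quantity δ(S,T) is even, i.e., δ(S,T) ≡ 0 (mod 2). -/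
open SimpleGraph

/-- The number of edges of `G` with first endpoint in `A` and second endpoint in `B`
(for disjoint `A` and `B` this is the number of edges between `A` and `B`). -/
noncomputable def interEdges {V : Type*} [Fintype V] (G : SimpleGraph V) (A B : Set V) : ℕ :=
  Nat.card {p : V × V // p.1 ∈ A ∧ p.2 ∈ B ∧ G.Adj p.1 p.2}

/-- `c(S,T)`: the number of components `D` of `G − (S ∪ T)` that are odd, i.e. such that
the number of edges of `G` between `D` and `T` is odd. -/
noncomputable def oddComponentCount {V : Type*} [Fintype V] [DecidableEq V]
    (G : SimpleGraph V) (S T : Finset V) : ℕ :=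
  Nat.card {c : (G.induce ((↑(S ∪ T) : Set V)ᶜ)).ConnectedComponent //
    Odd (interEdges G (Subtype.val '' c.supp) (↑T : Set V))}

/-- The degree of `y` in the graph `G − S`. -/
noncomputable def degreeDel {V : Type*} [Fintype V] (G : SimpleGraph V) (S : Finset V)
    (y : V) : ℕ :=
  {v : V | G.Adj y v ∧ v ∉ S}.ncard

/-- `δ(S,T) = 2|S| + Σ_{y ∈ T} d_{G−S}(y) − 2|T| − c(S,T)`. -/
noncomputable def tutteDelta {V : Type*} [Fintype V] [DecidableEq V]
    (G : SimpleGraph V) (S T : Finset V) : ℤ :=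
  2 * (S.card : ℤ) + (∑ y ∈ T, (degreeDel G S y : ℤ)) - 2 * (T.card : ℤ)
    - (oddComponentCount G S T : ℤ)

/-- A 2-factor of `G` is a spanning subgraph in which every vertex has degree exactly 2. -/
def HasTwoFactor {V : Type*} [Fintype V] (G : SimpleGraph V) : Prop :=
  ∃ H : G.Subgraph, H.IsSpanning ∧ ∀ v : V, (H.neighborSet v).ncard = 2

section auxLemmas

open scoped Classical

set_option linter.unusedSectionVars false

variable {V : Type*} [Fintype V] (G : SimpleGraph V)

private lemma interEdges_card' (A B : Set V) :
    interEdges G A B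
      = (Finset.univ.filter fun p : V × V => p.1 ∈ A ∧ p.2 ∈ B ∧ G.Adj p.1 p.2).card := by
  rw [interEdges, Nat.card_eq_fintype_card, Fintype.card_subtype]

private lemma interEdges_symm' (A B : Set V) : interEdges G A B = interEdges G B A :=
  Nat.card_congr ⟨fun p => ⟨(p.1.2, p.1.1), p.2.2.1, p.2.1, p.2.2.2.symm⟩,
    fun p => ⟨(p.1.2, p.1.1), p.2.2.1, p.2.1, p.2.2.2.symm⟩,
    fun _ => rfl, fun _ => rfl⟩

private lemma interEdges_union' (A B C : Set V) (h : Disjoint B C) :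
    interEdges G A (B ∪ C) = interEdges G A B + interEdges G A C := by
  have hd : Disjoint (fun p : V × V => p.1 ∈ A ∧ p.2 ∈ B ∧ G.Adj p.1 p.2)
      (fun p : V × V => p.1 ∈ A ∧ p.2 ∈ C ∧ G.Adj p.1 p.2) := by
    rw [Pi.disjoint_iff]
    intro p
    by_cases hB : p.2 ∈ B
    · have hC : p.2 ∉ C := Set.disjoint_left.mp h hB
      simp [hC]
    · simp [hB]
  rw [interEdges, interEdges, interEdges,
    Nat.card_congr ((Equiv.subtypeEquivRight (fun p : V × V => by
        simp only [Set.mem_union]; tauto)).trans (subtypeOrEquiv _ _ hd)),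
    Nat.card_sum]

private lemma interEdges_sum_left' (T : Finset V) (B : Set V) :
    interEdges G (↑T : Set V) B = ∑ y ∈ T, Nat.card {v : V // v ∈ B ∧ G.Adj y v} := by
  have e : {p : V × V // p.1 ∈ (T : Set V) ∧ p.2 ∈ B ∧ G.Adj p.1 p.2}
      ≃ Σ y : {y : V // y ∈ T}, {v : V // v ∈ B ∧ G.Adj y.1 v} :=
    ⟨fun p => ⟨⟨p.1.1, p.2.1⟩, ⟨p.1.2, p.2.2⟩⟩,
     fun x => ⟨(x.1.1, x.2.1), x.1.2, x.2.2⟩,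
     fun _ => rfl, fun _ => rfl⟩
  rw [interEdges, Nat.card_eq_fintype_card, Fintype.card_congr e, Fintype.card_sigma]
  rw [← Finset.sum_coe_sort T (fun y => Nat.card {v : V // v ∈ B ∧ G.Adj y v})]
  exact Finset.sum_congr rfl fun y _ => (Nat.card_eq_fintype_card).symm

private lemma interEdges_self_even' (A : Set V) : Even (interEdges G A A) := by
  rw [interEdges_card']
  suffices h : ((Finset.univ.filter fun p : V × V =>
      p.1 ∈ A ∧ p.2 ∈ A ∧ G.Adj p.1 p.2).card : ZMod 2) = 0 by
    rwa [ZMod.natCast_eq_zero_iff, ← even_iff_two_dvd] at h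
  rw [Finset.card_eq_sum_ones]
  push_cast
  refine Finset.sum_involution (fun p _ => p.swap) (fun p _ => ?_) (fun p hp _ => ?_)
    (fun p hp => ?_) (fun p hp => rfl)
  · decide
  · simp only [Finset.mem_filter, Finset.mem_univ, true_and] at hp
    intro hswap
    exact (G.ne_of_adj hp.2.2) (congrArg Prod.snd hswap ▸ rfl) |>.elim
  · simp only [Finset.mem_filter, Finset.mem_univ, true_and, Prod.fst_swap, Prod.snd_swap] at hp ⊢
    exact ⟨hp.2.1, hp.1, hp.2.2.symm⟩

private lemma interEdges_comp' (U T' : Set V)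
    [Fintype (G.induce U).ConnectedComponent] :
    interEdges G U T'
      = ∑ c : (G.induce U).ConnectedComponent,
          interEdges G (Subtype.val '' c.supp) T' := by
  have hsub : ∀ c : (G.induce U).ConnectedComponent, Subtype.val '' c.supp ⊆ U := by
    rintro c x ⟨a, _, rfl⟩; exact a.2
  have key : ∀ (c : (G.induce U).ConnectedComponent) (x : V),
      x ∈ Subtype.val '' c.supp ↔
        ∃ h : x ∈ U, (G.induce U).connectedComponentMk ⟨x, h⟩ = c := by
    intro c x
    constructor
    · rintro ⟨a, ha, rfl⟩
      exact ⟨a.2, by simpa using ha⟩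
    · rintro ⟨h, hc⟩
      exact ⟨⟨x, h⟩, hc, rfl⟩
  have e : {p : V × V // p.1 ∈ U ∧ p.2 ∈ T' ∧ G.Adj p.1 p.2}
      ≃ Σ c : (G.induce U).ConnectedComponent,
          {p : V × V // p.1 ∈ Subtype.val '' c.supp ∧ p.2 ∈ T' ∧ G.Adj p.1 p.2} :=
    { toFun := fun p => ⟨(G.induce U).connectedComponentMk ⟨p.1.1, p.2.1⟩,
        ⟨p.1, (key _ _).mpr ⟨p.2.1, rfl⟩, p.2.2⟩⟩
      invFun := fun x => ⟨x.2.1, hsub _ x.2.2.1, x.2.2.2⟩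
      left_inv := fun _ => rfl
      right_inv := by
        rintro ⟨c, ⟨p, hp, hT⟩⟩
        obtain ⟨h, hc⟩ := (key c p.1).mp hp
        subst hc
        rfl }
  rw [interEdges, Nat.card_eq_fintype_card, Fintype.card_congr e, Fintype.card_sigma]
  exact Finset.sum_congr rfl fun c _ => by rw [interEdges, Nat.card_eq_fintype_card]

private lemma odd_count_cast (ι : Type*) [Fintype ι] (f : ι → ℕ) :
    ((Nat.card {c : ι // Odd (f c)} : ℕ) : ZMod 2) = ∑ c : ι, ((f c : ℕ) : ZMod 2) := by
  have hcast : ∀ n : ℕ, ((n : ZMod 2)) = if Odd n then 1 else 0 := by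
    intro n
    rw [← ZMod.natCast_mod n 2]
    rcases Nat.mod_two_eq_zero_or_one n with h | h <;>
      simp [h, Nat.odd_iff]
  rw [Nat.card_eq_fintype_card, Fintype.card_subtype,
    show (∑ c : ι, ((f c : ℕ) : ZMod 2)) = ∑ c : ι, if Odd (f c) then (1 : ZMod 2) else 0 from
      Finset.sum_congr rfl fun c _ => hcast (f c),
    Finset.sum_boole]

end auxLemmas

/-- For every graph `G` and every pair of disjoint vertex subsets `S`, `T` of `G`,
the quantity `δ(S,T)` is even. -/
theorem tutteDelta_even {V : Type*} [Fintype V] [DecidableEq V] (G : SimpleGraph V)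
    (S T : Finset V) (hST : Disjoint S T) : Even (tutteDelta G S T) := by
  classical
  have hdeg : ∀ y : V, Nat.card {v : V // v ∈ (↑S : Set V)ᶜ ∧ G.Adj y v} = degreeDel G S y := by
    intro y
    rw [degreeDel, ← Nat.card_coe_set_eq]
    refine Nat.card_congr (Equiv.subtypeEquivRight ?_)
    intro v
    simp [and_comm]
  have h1 : ∑ y ∈ T, degreeDel G S y = interEdges G (↑T : Set V) ((↑S : Set V)ᶜ) := by
    rw [interEdges_sum_left']
    exact Finset.sum_congr rfl fun y _ => (hdeg y).symm
  have hsplit : ((↑S : Set V)ᶜ) = (↑T : Set V) ∪ ((↑(S ∪ T) : Set V))ᶜ := by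
    ext v
    simp only [Set.mem_compl_iff, Set.mem_union, Finset.coe_union, Set.mem_union,
      Finset.mem_coe, Set.mem_compl_iff]
    constructor
    · intro hvS
      by_cases hvT : v ∈ T
      · exact Or.inl hvT
      · exact Or.inr (by simp [hvS, hvT])
    · rintro (hvT | hvU)
      · exact fun hvS => (Finset.disjoint_left.mp hST hvS) hvT
      · intro hvS; exact hvU (by simp [hvS])
  have hdisjTU : Disjoint (↑T : Set V) (((↑(S ∪ T) : Set V))ᶜ) := by
    rw [Set.disjoint_left]
    intro v hvT hvU
    exact hvU (by simp [Finset.mem_coe.mp hvT])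
  have h2 : interEdges G (↑T : Set V) ((↑S : Set V)ᶜ)
      = interEdges G (↑T : Set V) (↑T : Set V)
        + interEdges G (↑T : Set V) (((↑(S ∪ T) : Set V))ᶜ) := by
    rw [hsplit, interEdges_union' G _ _ _ hdisjTU]
  have h3 : interEdges G (↑T : Set V) (((↑(S ∪ T) : Set V))ᶜ)
      = ∑ c : (G.induce ((↑(S ∪ T) : Set V)ᶜ)).ConnectedComponent,
          interEdges G (Subtype.val '' c.supp) (↑T : Set V) := by
    exact (interEdges_symm' G _ _).trans (interEdges_comp' G _ _)
  have hTT : ((interEdges G (↑T : Set V) (↑T : Set V) : ℕ) : ZMod 2) = 0 := by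
    rw [ZMod.natCast_eq_zero_iff]
    exact (interEdges_self_even' G (↑T : Set V)).two_dvd
  have hodd : ((oddComponentCount G S T : ℕ) : ZMod 2)
      = ∑ c : (G.induce ((↑(S ∪ T) : Set V)ᶜ)).ConnectedComponent,
          ((interEdges G (Subtype.val '' c.supp) (↑T : Set V) : ℕ) : ZMod 2) := by
    rw [oddComponentCount]
    exact odd_count_cast _ _
  have hQ : ((∑ y ∈ T, degreeDel G S y : ℕ) : ZMod 2)
      = ((oddComponentCount G S T : ℕ) : ZMod 2) := by
    rw [h1, h2, h3, hodd]
    push_cast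
    rw [hTT]
    ring
  suffices h : ((tutteDelta G S T : ℤ) : ZMod 2) = 0 by
    rw [ZMod.intCast_zmod_eq_zero_iff_dvd] at h
    rw [even_iff_two_dvd]
    exact_mod_cast h
  unfold tutteDelta
  push_cast
  push_cast at hQ
  rw [show ((2 : ZMod 2)) = 0 by decide, hQ]
  ring
end

section
/- If a graph G has a barrier, that is, a pair (S,T) of disjoint vertex subsets with δ(S,T) ≤ −2, then G has no 2-factor. -/
open SimpleGraph Finset
open scoped Classical


open SimpleGraph

section MyAux

variable {V : Type*} [Fintype V] [DecidableEq V]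

noncomputable def ec (G : SimpleGraph V) (A B : Finset V) : ℕ :=
  Nat.card {p : V × V // p.1 ∈ A ∧ p.2 ∈ B ∧ G.Adj p.1 p.2}

lemma interEdges_eq_ec (G : SimpleGraph V) (A B : Finset V) :
    interEdges G ↑A ↑B = ec G A B := rfl

lemma ec_card_filter (G : SimpleGraph V) (A B : Finset V) :
    ec G A B = ((A ×ˢ B).filter fun p => G.Adj p.1 p.2).card := by
  rw [ec, Nat.card_eq_fintype_card, Fintype.card_subtype]
  congr 1
  ext p
  simp [Finset.mem_product, and_assoc]

lemma ec_comm (G : SimpleGraph V) (A B : Finset V) : ec G A B = ec G B A := by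
  rw [ec, ec]
  apply Nat.card_congr
  exact ⟨fun p => ⟨p.1.swap, p.2.2.1, p.2.1, p.2.2.2.symm⟩,
    fun p => ⟨p.1.swap, p.2.2.1, p.2.1, p.2.2.2.symm⟩,
    fun p => by simp, fun p => by simp⟩

lemma ec_le {G H : SimpleGraph V} (h : H ≤ G) (A B : Finset V) : ec H A B ≤ ec G A B := by
  rw [ec_card_filter, ec_card_filter]
  apply Finset.card_le_card
  intro p hp
  simp only [Finset.mem_filter] at *
  exact ⟨hp.1, h hp.2⟩

lemma ec_union_right (G : SimpleGraph V) {A B₁ B₂ : Finset V} (h : Disjoint B₁ B₂) :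
    ec G A (B₁ ∪ B₂) = ec G A B₁ + ec G A B₂ := by
  rw [ec_card_filter, ec_card_filter, ec_card_filter, Finset.product_union,
    Finset.filter_union, Finset.card_union_of_disjoint]
  apply Finset.disjoint_filter_filter
  rw [Finset.disjoint_left]
  intro p hp hp'
  simp only [Finset.mem_product] at *
  exact (Finset.disjoint_left.mp h) hp.2 hp'.2

lemma ec_union_left (G : SimpleGraph V) {A₁ A₂ B : Finset V} (h : Disjoint A₁ A₂) :
    ec G (A₁ ∪ A₂) B = ec G A₁ B + ec G A₂ B := by
  rw [ec_comm, ec_union_right G h, ec_comm, ec_comm G B]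

lemma ec_sum_left (G : SimpleGraph V) (A B : Finset V) :
    ec G A B = ∑ y ∈ A, (B.filter fun v => G.Adj y v).card := by
  rw [ec_card_filter, Finset.card_filter, Finset.sum_product]
  refine Finset.sum_congr rfl fun y _ => ?_
  rw [Finset.card_filter]

lemma even_card_of_involution {α : Type*} [DecidableEq α] (s : Finset α) (f : α → α)
    (hmem : ∀ x ∈ s, f x ∈ s) (hinv : ∀ x ∈ s, f (f x) = x) (hne : ∀ x ∈ s, f x ≠ x) :
    Even s.card := by
  generalize hn : s.card = n
  induction n using Nat.strong_induction_on generalizing s with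
  | _ n ih =>
    rcases s.eq_empty_or_nonempty with rfl | ⟨x, hx⟩
    · simp [← hn]
    · have hfx : f x ∈ s := hmem x hx
      have hfxx : f x ≠ x := hne x hx
      have hfxe : f x ∈ s.erase x := Finset.mem_erase.mpr ⟨hfxx, hfx⟩
      set s' := (s.erase x).erase (f x) with hs'
      have hsub : ∀ y ∈ s', y ∈ s ∧ y ≠ x ∧ y ≠ f x := by
        intro y hy
        simp only [hs', Finset.mem_erase] at hy
        exact ⟨hy.2.2, hy.2.1, hy.1⟩
      have hcard : s.card = s'.card + 2 := by
        have h1 : (s.erase x).card = s.card - 1 := Finset.card_erase_of_mem hx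
        have h2 : s'.card = (s.erase x).card - 1 := Finset.card_erase_of_mem hfxe
        have h3 : 1 ≤ s.card := Finset.card_pos.mpr ⟨x, hx⟩
        have h4 : 1 ≤ (s.erase x).card := Finset.card_pos.mpr ⟨f x, hfxe⟩
        omega
      have hmem' : ∀ y ∈ s', f y ∈ s' := by
        intro y hy
        obtain ⟨hys, hyx, hyfx⟩ := hsub y hy
        have hfy : f y ∈ s := hmem y hys
        refine Finset.mem_erase.mpr ⟨?_, Finset.mem_erase.mpr ⟨?_, hfy⟩⟩
        · intro h; apply hyx; rw [← hinv y hys, h, hinv x hx]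
        · intro h; apply hyfx; rw [← hinv y hys, h]
      have : Even s'.card := by
        refine ih s'.card (by omega) s' ?_ ?_ ?_ rfl
        · exact hmem'
        · intro y hy; exact hinv y (hsub y hy).1
        · intro y hy; exact hne y (hsub y hy).1
      rw [← hn, hcard]
      exact this.add even_two

lemma ec_self_even (G : SimpleGraph V) (A : Finset V) : Even (ec G A A) := by
  rw [ec_card_filter]
  apply even_card_of_involution _ (fun p => p.swap)
  · intro p hp
    simp only [Finset.mem_filter, Finset.mem_product] at *
    exact ⟨⟨hp.1.2, hp.1.1⟩, hp.2.symm⟩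
  · intro p _; simp
  · intro p hp
    simp only [Finset.mem_filter] at hp
    intro h
    have h2 : p.2 = p.1 := congrArg Prod.fst h
    exact G.loopless.irrefl p.1 (h2 ▸ hp.2)


lemma interEdges_eq_ec' {V : Type*} [Fintype V] (G : SimpleGraph V) (A : Set V) (B : Finset V) :
    interEdges G A ↑B = ec G (Set.toFinite A).toFinset B := by
  apply Nat.card_congr
  apply Equiv.subtypeEquivRight
  intro p
  rw [Set.Finite.mem_toFinset, Finset.mem_coe]


theorem twoFactor_ineq {V : Type*} [Fintype V] [DecidableEq V]
    (G : SimpleGraph V) (S T : Finset V) (hST : Disjoint S T)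
    (H : G.Subgraph) (hsp : H.IsSpanning) (hdeg : ∀ v : V, (H.neighborSet v).ncard = 2) :
    2 * T.card + oddComponentCount G S T ≤ 2 * S.card + ∑ y ∈ T, degreeDel G S y := by
  set U : Finset V := (S ∪ T)ᶜ with hU
  set GU := G.induce ((↑(S ∪ T) : Set V)ᶜ) with hGU
  haveI : Fintype GU.ConnectedComponent := Fintype.ofFinite _
  set Dfin : GU.ConnectedComponent → Finset V :=
    fun c => (Set.toFinite (Subtype.val '' c.supp)).toFinset with hDfin
  have hmemD : ∀ (c : GU.ConnectedComponent) (v : V),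
      v ∈ Dfin c ↔ ∃ hv : v ∈ ((↑(S ∪ T) : Set V)ᶜ), GU.connectedComponentMk ⟨v, hv⟩ = c := by
    intro c v
    rw [hDfin, Set.Finite.mem_toFinset]
    constructor
    · rintro ⟨⟨w, hw⟩, hws, rfl⟩
      exact ⟨hw, (ConnectedComponent.mem_supp_iff _ _).mp hws⟩
    · rintro ⟨hv, hc⟩
      exact ⟨⟨v, hv⟩, (ConnectedComponent.mem_supp_iff _ _).mpr hc, rfl⟩
  have hUset : ∀ v : V, v ∈ ((↑(S ∪ T) : Set V)ᶜ) ↔ v ∈ U := by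
    intro v
    simp [hU, Finset.mem_compl]
  have hD_sub : ∀ c, Dfin c ⊆ U := by
    intro c v hv
    obtain ⟨hv', _⟩ := (hmemD c v).mp hv
    exact (hUset v).mp hv'
  have hU_biUnion : U = Finset.univ.biUnion Dfin := by
    ext v
    simp only [Finset.mem_biUnion, Finset.mem_univ, true_and]
    constructor
    · intro hv
      have hv' := (hUset v).mpr hv
      exact ⟨GU.connectedComponentMk ⟨v, hv'⟩, (hmemD _ v).mpr ⟨hv', rfl⟩⟩
    · rintro ⟨c, hc⟩
      exact hD_sub c hc
  have hDdisj : (↑(Finset.univ : Finset GU.ConnectedComponent) : Set GU.ConnectedComponent).PairwiseDisjoint Dfin := by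
    intro c _ c' _ hne
    simp only [Function.onFun]
    rw [Finset.disjoint_left]
    intro v hv hv'
    obtain ⟨h1, h2⟩ := (hmemD c v).mp hv
    obtain ⟨h1', h2'⟩ := (hmemD c' v).mp hv'
    exact hne (h2 ▸ h2' ▸ rfl)
  have hclosed : ∀ c v w, v ∈ Dfin c → G.Adj v w → w ∈ U → w ∈ Dfin c := by
    intro c v w hv hvw hwU
    obtain ⟨hv', hc⟩ := (hmemD c v).mp hv
    have hw' : w ∈ ((↑(S ∪ T) : Set V)ᶜ) := (hUset w).mpr hwU
    refine (hmemD c w).mpr ⟨hw', ?_⟩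
    rw [← hc]
    exact ConnectedComponent.sound (Adj.reachable (by exact hvw.symm : GU.Adj ⟨w, hw'⟩ ⟨v, hv'⟩)).symm.symm
  have hsplitU : ∀ (K : SimpleGraph V) (A : Finset V),
      ec K U A = ∑ c, ec K (Dfin c) A := by
    intro K A
    rw [ec_sum_left, hU_biUnion, Finset.sum_biUnion hDdisj]
    exact Finset.sum_congr rfl fun c _ => (ec_sum_left K (Dfin c) A).symm
  have hec_zero : ∀ c, ec G (Dfin c) (U \ Dfin c) = 0 := by
    intro c
    rw [ec_card_filter, Finset.card_eq_zero, Finset.eq_empty_iff_forall_notMem]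
    intro p hp
    simp only [Finset.mem_filter, Finset.mem_product, Finset.mem_sdiff] at hp
    exact hp.1.2.2 (hclosed c p.1 p.2 hp.1.1 hp.2 hp.1.2.1)
  set H' := H.spanningCoe with hH'
  have hH'G : H' ≤ G := H.spanningCoe_le
  have hdeg' : ∀ y : V, (Finset.univ.filter fun v => H'.Adj y v).card = 2 := by
    intro y
    have h := hdeg y
    rw [Set.ncard_eq_toFinset_card'] at h
    rw [← h]
    congr 1
    ext v
    simp [Subgraph.neighborSet, hH', Subgraph.spanningCoe]
    exact (@Set.mem_toFinset _ _ (H.instFintypeElemNeighborSetOfVertsOfDecidablePredMemSet y) v).symm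
  have hhs : ∀ A : Finset V, ec H' A Finset.univ = 2 * A.card := by
    intro A
    rw [ec_sum_left]
    rw [Finset.sum_congr rfl fun y _ => hdeg' y]
    simp [Finset.sum_const, Nat.mul_comm]
  -- decomposition of univ
  have hdisjSTU : Disjoint (S ∪ T) U := disjoint_compl_right
  have hdisjSU : Disjoint S U := hdisjSTU.mono_left Finset.subset_union_left
  have hdisjTU : Disjoint T U := hdisjSTU.mono_left Finset.subset_union_right
  have huniv : (Finset.univ : Finset V) = (S ∪ T) ∪ U := by
    rw [hU, Finset.union_compl]
  have hec_univ : ∀ (K : SimpleGraph V) (A : Finset V),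
      ec K A Finset.univ = ec K A S + ec K A T + ec K A U := by
    intro K A
    rw [huniv, ec_union_right K hdisjSTU, ec_union_right K hST]
  -- parity of each component
  have hpar : ∀ c, Even (ec H' (Dfin c) S + ec H' (Dfin c) T) := by
    intro c
    have h1 : ec H' (Dfin c) Finset.univ = 2 * (Dfin c).card := hhs _
    have h2 : ec H' (Dfin c) U = ec H' (Dfin c) (Dfin c) := by
      have hsplit : U = Dfin c ∪ (U \ Dfin c) := by
        rw [Finset.union_sdiff_of_subset (hD_sub c)]
      rw [hsplit, ec_union_right H' Finset.disjoint_sdiff]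
      have h0 : ec H' (Dfin c) (U \ Dfin c) = 0 :=
        Nat.le_zero.mp (hec_zero c ▸ ec_le hH'G _ _)
      omega
    have h3 := hec_univ H' (Dfin c)
    obtain ⟨a, ha⟩ := ec_self_even H' (Dfin c)
    rw [Nat.even_iff]
    rw [h1, h2] at h3
    omega
  -- odd component count
  have hoddc : oddComponentCount G S T
      = (Finset.univ.filter fun c => Odd (ec G (Dfin c) T)).card := by
    rw [oddComponentCount, Nat.card_eq_fintype_card, Fintype.card_subtype]
    congr 1
    apply Finset.filter_congr
    intro c _
    rw [interEdges_eq_ec']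
  set Codd := Finset.univ.filter fun c => Odd (ec G (Dfin c) T) with hCodd
  set A1 := Codd.filter fun c => Odd (ec H' (Dfin c) T) with hA1
  set A2 := Codd.filter fun c => ¬ Odd (ec H' (Dfin c) T) with hA2
  have hA12 : A1.card + A2.card = Codd.card :=
    Finset.card_filter_add_card_filter_not _
  -- Inequality 1 : ec H' T S + A1.card ≤ 2 * S.card
  have hineq1 : ec H' T S + A1.card ≤ 2 * S.card := by
    have h1 : 2 * S.card = ec H' S S + ec H' S T + ec H' S U := by
      rw [← hhs S, hec_univ]
    have h2 : ec H' S U = ∑ c, ec H' (Dfin c) S := by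
      rw [ec_comm, hsplitU]
    have h3 : A1.card ≤ ∑ c, ec H' (Dfin c) S := by
      calc A1.card = ∑ c ∈ A1, 1 := by rw [Finset.card_eq_sum_ones]
        _ ≤ ∑ c ∈ A1, ec H' (Dfin c) S := by
            apply Finset.sum_le_sum
            intro c hc
            have hcT : Odd (ec H' (Dfin c) T) := (Finset.mem_filter.mp hc).2
            have hp := hpar c
            rw [Nat.even_iff] at hp
            rw [Nat.odd_iff] at hcT
            omega
        _ ≤ ∑ c, ec H' (Dfin c) S :=
            Finset.sum_le_sum_of_subset (Finset.subset_univ _)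
    have h4 : ec H' T S = ec H' S T := ec_comm _ _ _
    omega
  -- Inequality 2
  have hdegsum : ∑ y ∈ T, degreeDel G S y = ec G T Sᶜ := by
    rw [ec_sum_left]
    refine Finset.sum_congr rfl fun y _ => ?_
    rw [degreeDel, Set.ncard_eq_toFinset_card']
    congr 1
    ext v
    simp [and_comm]
  have hScompl : Sᶜ = T ∪ U := by
    ext v
    simp only [Finset.mem_compl, Finset.mem_union, hU]
    constructor
    · intro hv
      by_cases hvT : v ∈ T
      · exact Or.inl hvT
      · exact Or.inr (by simp [hv, hvT])
    · intro hv
      rcases hv with hv | hv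
      · exact Finset.disjoint_right.mp hST hv
      · exact fun h => hv (Or.inl h)
  have hineq2 : ec H' T T + (∑ c, ec H' (Dfin c) T) + A2.card ≤ ∑ y ∈ T, degreeDel G S y := by
    rw [hdegsum, hScompl, ec_union_right G hdisjTU]
    have h1 : ec H' T T ≤ ec G T T := ec_le hH'G _ _
    have h2 : (∑ c, ec H' (Dfin c) T) + A2.card ≤ ec G T U := by
      rw [ec_comm, hsplitU]
      have hA2card : A2.card = ∑ c, if c ∈ A2 then 1 else 0 := by
        rw [Finset.sum_ite_mem, Finset.univ_inter, Finset.card_eq_sum_ones]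
      rw [hA2card, ← Finset.sum_add_distrib]
      apply Finset.sum_le_sum
      intro c _
      by_cases hc : c ∈ A2
      · simp only [hc, if_true]
        have hcodd : Odd (ec G (Dfin c) T) :=
          (Finset.mem_filter.mp (Finset.mem_of_mem_filter c hc)).2
        have hceven : ¬ Odd (ec H' (Dfin c) T) := (Finset.mem_filter.mp hc).2
        have hle : ec H' (Dfin c) T ≤ ec G (Dfin c) T := ec_le hH'G _ _
        rw [Nat.odd_iff] at hcodd hceven
        omega
      · simp only [hc, if_false]
        simpa using ec_le hH'G (Dfin c) T
    omega
  -- total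
  have htot : 2 * T.card = ec H' T S + ec H' T T + (∑ c, ec H' (Dfin c) T) := by
    rw [← hhs T, hec_univ]
    congr 1
    rw [ec_comm, hsplitU]
  rw [hoddc]
  omega

end MyAux

/-- If a graph `G` has a barrier, i.e. a pair `(S,T)` of disjoint vertex subsets with
`δ(S,T) ≤ −2`, then `G` has no 2-factor. -/
theorem not_hasTwoFactor_of_barrier {V : Type*} [Fintype V] [DecidableEq V]
    (G : SimpleGraph V) (hbarrier : ∃ S T : Finset V, Disjoint S T ∧ tutteDelta G S T ≤ -2) :
    ¬ HasTwoFactor G := by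
  rintro ⟨H, hsp, hdeg⟩
  obtain ⟨S, T, hST, hd⟩ := hbarrier
  have key := twoFactor_ineq G S T hST H hsp hdeg
  rw [tutteDelta] at hd
  have hcast : (∑ y ∈ T, (degreeDel G S y : ℤ)) = ((∑ y ∈ T, degreeDel G S y : ℕ) : ℤ) := by
    push_cast
    rfl
  rw [hcast] at hd
  have key' : (2 * T.card + oddComponentCount G S T : ℤ)
      ≤ 2 * S.card + ((∑ y ∈ T, degreeDel G S y : ℕ) : ℤ) := by
    exact_mod_cast key
  linarith
end

section
/- Let G be a noncomplete connected graph and let W be a cutset of G chosen so that h(W) := (3/2)·c(G−W) − |W| is maximum over all cutsets of G. Then no component of G−W has a cutvertex. -/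
open SimpleGraph

/-- `W` is a cutset of `G`: the graph `G − W` has at least two connected components. -/
def IsCutset {V : Type*} [Fintype V] (G : SimpleGraph V) (W : Finset V) : Prop :=
  2 ≤ delComponents G W

/-- The quantity `h(W) = (3/2)·c(G − W) − |W|`. -/
noncomputable def hFun {V : Type*} [Fintype V] (G : SimpleGraph V) (W : Finset V) : ℝ :=
  3 / 2 * (delComponents G W : ℝ) - (W.card : ℝ)

/-- Inclusion hom between induced subgraphs. -/
def induceHomLE {V : Type*} (G : SimpleGraph V) {A B : Set V} (h : A ⊆ B) :
    G.induce A →g G.induce B :=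
  ⟨fun v => ⟨v.1, h v.2⟩, fun {a b} hab => hab⟩

lemma reach_of_walk {V : Type*} (G : SimpleGraph V) {A B : Set V} {u v : A}
    (w : (G.induce A).Walk u v) (hw : ∀ z ∈ w.support, (z : V) ∈ B) :
    (G.induce B).Reachable ⟨u, hw u w.start_mem_support⟩ ⟨v, hw v w.end_mem_support⟩ := by
  induction w with
  | nil => exact Reachable.refl _
  | @cons a b c h p ih =>
    have hb : (b : V) ∈ B := hw b (by simp)
    have hadj : (G.induce B).Adj ⟨a, hw a (by simp)⟩ ⟨b, hb⟩ := h
    refine hadj.reachable.trans ?_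
    have := ih (fun z hz => hw z (by simp [hz]))
    exact this

lemma card_succ_le {α β : Type*} [Finite α] [Finite β] (f : α → β)
    (hs : Function.Surjective f) (hni : ¬ Function.Injective f) :
    Nat.card β + 1 ≤ Nat.card α := by
  have := Fintype.ofFinite α
  have := Fintype.ofFinite β
  have := Fintype.card_lt_of_surjective_not_injective f hs hni
  simp only [Nat.card_eq_fintype_card]
  omega

/-- Let `G` be a noncomplete connected graph and `W` a cutset of `G` maximizing
`h(W) = (3/2)·c(G−W) − |W|` over all cutsets of `G`.  Then no component of `G − W` has a
cutvertex, i.e. for every component `Q` of `G − W` and every vertex `x` of `Q`, the graph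
`Q − x` does not have two or more connected components. -/
theorem components_have_no_cutvertex {V : Type*} [Fintype V]
    (G : SimpleGraph V) (hnc : G ≠ ⊤) (hconn : G.Connected)
    (W : Finset V) (hW : IsCutset G W)
    (hmax : ∀ X : Finset V, IsCutset G X → hFun G X ≤ hFun G W) :
    ∀ c : (G.induce ((↑W : Set V)ᶜ)).ConnectedComponent,
      ∀ x ∈ (Subtype.val '' c.supp : Set V),
        ¬ (2 ≤ Nat.card ((G.induce ((Subtype.val '' c.supp : Set V) \ {x})).ConnectedComponent)) := by
  classical
  rintro c x hx h2
  obtain ⟨xv, hxv, rfl⟩ := hx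
  set W' : Finset V := insert (↑xv : V) W with hW'def
  have hxW : (xv : V) ∉ W := by
    have h := xv.2
    rw [Set.mem_compl_iff, Finset.mem_coe] at h
    exact h
  have hsub : ((↑W' : Set V))ᶜ ⊆ ((↑W : Set V))ᶜ := by
    intro z hz
    simp only [hW'def, Finset.coe_insert, Set.mem_compl_iff, Set.mem_insert_iff] at hz ⊢
    exact fun h => hz (Or.inr h)
  set A' : Set V := (Subtype.val '' c.supp : Set V) \ {(↑xv : V)} with hA'def
  have hA'sub : A' ⊆ ((↑W' : Set V))ᶜ := by
    rintro z ⟨⟨zv, hzv, rfl⟩, hne⟩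
    simp only [hW'def, Finset.coe_insert, Set.mem_compl_iff, Set.mem_insert_iff]
    rintro (h | h)
    · exact hne h
    · exact zv.2 h
  set f : (G.induce ((↑W' : Set V)ᶜ)).ConnectedComponent →
      (G.induce ((↑W : Set V)ᶜ)).ConnectedComponent :=
    SimpleGraph.ConnectedComponent.map (induceHomLE G hsub) with hfdef
  -- a vertex of (↑W')ᶜ whose underlying vertex lies in the image of c.supp has f-component c
  have key : ∀ z : ((↑W' : Set V)ᶜ : Set V), (z : V) ∈ (Subtype.val '' c.supp : Set V) →
      f ((G.induce ((↑W' : Set V)ᶜ)).connectedComponentMk z) = c := by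
    rintro z ⟨zv, hzv, hzeq⟩
    have : (induceHomLE G hsub) z = zv := Subtype.ext hzeq.symm
    simp only [hfdef, SimpleGraph.ConnectedComponent.map_mk, this]
    exact (SimpleGraph.ConnectedComponent.mem_supp_iff _ _).mp hzv
  -- two distinct components of A'
  have hnt : Nontrivial ((G.induce A').ConnectedComponent) := by
    rw [← Finite.one_lt_card_iff_nontrivial]; omega
  obtain ⟨e1, e2, he12⟩ := hnt
  obtain ⟨u1, hu1⟩ := e1.exists_rep
  obtain ⟨u2, hu2⟩ := e2.exists_rep
  have ha1 : (u1 : V) ∈ ((↑W' : Set V))ᶜ := hA'sub u1.2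
  have ha2 : (u2 : V) ∈ ((↑W' : Set V))ᶜ := hA'sub u2.2
  set a1 : ((↑W' : Set V)ᶜ : Set V) := ⟨(u1 : V), ha1⟩
  set a2 : ((↑W' : Set V)ᶜ : Set V) := ⟨(u2 : V), ha2⟩
  -- f not injective
  have hfa1 : f ((G.induce ((↑W' : Set V)ᶜ)).connectedComponentMk a1) = c := key a1 u1.2.1
  have hfa2 : f ((G.induce ((↑W' : Set V)ᶜ)).connectedComponentMk a2) = c := key a2 u2.2.1
  have hne12 : (G.induce ((↑W' : Set V)ᶜ)).connectedComponentMk a1 ≠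
      (G.induce ((↑W' : Set V)ᶜ)).connectedComponentMk a2 := by
    intro heq
    obtain ⟨w⟩ := (SimpleGraph.ConnectedComponent.eq).mp heq
    have hwall : ∀ z ∈ w.support, (z : V) ∈ A' := by
      intro z hz
      constructor
      · -- z is reachable from a1, so its component maps to c
        have hr : (G.induce ((↑W' : Set V)ᶜ)).Reachable a1 z := ⟨w.takeUntil z hz⟩
        have : f ((G.induce ((↑W' : Set V)ᶜ)).connectedComponentMk z) = c := by
          rw [← SimpleGraph.ConnectedComponent.eq.mpr hr.symm] at hfa1
          exact hfa1
        simp only [hfdef, SimpleGraph.ConnectedComponent.map_mk] at this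
        exact ⟨(induceHomLE G hsub) z,
          (SimpleGraph.ConnectedComponent.mem_supp_iff _ _).mpr this, rfl⟩
      · -- z ≠ xv
        intro hzx
        have := z.2
        simp only [hW'def, Finset.coe_insert, Set.mem_compl_iff, Set.mem_insert_iff] at this
        exact this (Or.inl hzx)
    have hre : (G.induce A').Reachable ⟨(a1 : V), hwall a1 w.start_mem_support⟩
        ⟨(a2 : V), hwall a2 w.end_mem_support⟩ := reach_of_walk G w hwall
    have h1 : (⟨(a1 : V), hwall a1 w.start_mem_support⟩ : A') = u1 := Subtype.ext rfl
    have h2' : (⟨(a2 : V), hwall a2 w.end_mem_support⟩ : A') = u2 := Subtype.ext rfl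
    rw [h1, h2'] at hre
    exact he12 (hu1 ▸ hu2 ▸ SimpleGraph.ConnectedComponent.eq.mpr hre)
  have hni : ¬ Function.Injective f := by
    intro hinj
    exact hne12 (hinj (hfa1.trans hfa2.symm))
  -- f surjective
  have hs : Function.Surjective f := by
    intro d
    by_cases hd : d = c
    · exact ⟨_, hfa1.trans hd.symm⟩
    · obtain ⟨v, hv⟩ := d.exists_rep
      have hvx : (v : V) ≠ (↑xv : V) := by
        intro heq
        apply hd
        rw [← hv]
        have : v = xv := Subtype.ext heq
        rw [this]
        exact (SimpleGraph.ConnectedComponent.mem_supp_iff _ _).mp hxv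
      have hvW' : (v : V) ∈ ((↑W' : Set V))ᶜ := by
        simp only [hW'def, Finset.coe_insert, Set.mem_compl_iff, Set.mem_insert_iff]
        rintro (h | h)
        · exact hvx h
        · exact v.2 h
      refine ⟨(G.induce ((↑W' : Set V)ᶜ)).connectedComponentMk ⟨(v : V), hvW'⟩, ?_⟩
      have : (induceHomLE G hsub) ⟨(v : V), hvW'⟩ = v := Subtype.ext rfl
      simp only [hfdef, SimpleGraph.ConnectedComponent.map_mk, this]
      exact hv
  -- counting
  have hcard : delComponents G W + 1 ≤ delComponents G W' :=
    card_succ_le f hs hni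
  have hcut' : IsCutset G W' := by
    unfold IsCutset at hW ⊢
    omega
  have hle := hmax W' hcut'
  have hcardW' : (W'.card : ℝ) = W.card + 1 := by
    rw [hW'def, Finset.card_insert_of_notMem hxW]
    push_cast; ring
  have hcR : (delComponents G W : ℝ) + 1 ≤ (delComponents G W' : ℝ) := by
    exact_mod_cast hcard
  unfold hFun at hle
  rw [hcardW'] at hle
  linarith
end
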